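/- arXiv:0811.3215 — 3 statements merged into one kernel-verified Lean document; each statement's English description precedes it below -/
import Mathlib

section
/- Let Ω[J] be a free multicategory. There is a unique system of partial binary 'arrow replacement' operations u ▪_r v, for u an arrow of Ω[J] and r an index of an occurrence of an indeterminate f = ⟨u⟩(r) ∈ J in u, satisfying: (1) u ▪_r v is defined iff Sv = Sf and Tv = Tf, and then S(u ▪_r v) = Su and T(u ▪_r v) = Tu; (2) if u = f ∈ J with its single occurrence index r, then u ▪_r v = v; (3) if u = u' ⊙_j u'' then u ▪_r v = (u' ▪_r v) ⊙_j u'' when the occurrence r lies in u', and u ▪_r v = u' ⊙_j (u'' ▪_r v) when r lies in u''. -/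
/-- An object system: objects, object types, and a typing map. -/
structure ObjSystem : Type 1 where
  O : Type
  Ot : Type
  typ : O → Ot

/-- A finite indexed family of objects of `Ω` (indices in a finite subset of ℕ;
values of `fam` outside `idx` are irrelevant). -/
structure Sig (Ω : ObjSystem) where
  idx : Finset ℕ
  fam : ℕ → Ω.O

/-- Equality of finite indexed families (ignoring junk values outside the index set). -/
def Sig.Eqv {Ω : ObjSystem} (σ τ : Sig Ω) : Prop :=
  σ.idx = τ.idx ∧ ∀ i ∈ σ.idx, σ.fam i = τ.fam i

/-- Definedness of the multicomposition `u ⊙_r v`: `r` lies in the source of `u`,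
the target of `v` is the type of the object at place `r`, and (disjointness
convention) the index sets are chosen so that coprojections are inclusions. -/
def MDef {Ω : ObjSystem} {A : Type} (S : A → Sig Ω) (T : A → Ω.Ot)
    (u : A) (r : ℕ) (v : A) : Prop :=
  r ∈ (S u).idx ∧ T v = Ω.typ ((S u).fam r) ∧
    Disjoint ((S u).idx.erase r) (S v).idx

/-- A multicategory based on the object system `Ω`, with set of arrows `A`. -/
structure Multicat (Ω : ObjSystem) (A : Type) where
  S : A → Sig Ω
  T : A → Ω.Ot
  comp : A → ℕ → A → A
  ide : Ω.O → A
  S_ide : ∀ x, ∃ r, (S (ide x)).idx = {r} ∧ (S (ide x)).fam r = x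
  T_ide : ∀ x, T (ide x) = Ω.typ x
  T_comp : ∀ u r v, MDef S T u r v → T (comp u r v) = T u
  S_comp_idx : ∀ u r v, MDef S T u r v →
    (S (comp u r v)).idx = ((S u).idx.erase r) ∪ (S v).idx
  S_comp_fam : ∀ u r v, MDef S T u r v → ∀ i,
    (i ∈ (S v).idx → (S (comp u r v)).fam i = (S v).fam i) ∧
    (i ∈ (S u).idx.erase r → (S (comp u r v)).fam i = (S u).fam i)
  id_left : ∀ x u r, MDef S T (ide x) r u → comp (ide x) r u = u
  id_right : ∀ u r x, (S u).fam r = x → (S (ide x)).idx = {r} →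
    MDef S T u r (ide x) → comp u r (ide x) = u
  mcomm : ∀ u r v q w, r ≠ q → MDef S T u r v → MDef S T u q w →
    MDef S T (comp u r v) q w → MDef S T (comp u q w) r v →
    comp (comp u r v) q w = comp (comp u q w) r v
  massoc : ∀ u r v q w, MDef S T u r v → q ∈ (S v).idx → MDef S T v q w →
    MDef S T (comp u r v) q w → MDef S T u r (comp v q w) →
    comp (comp u r v) q w = comp u r (comp v q w)

/-- A morphism of object systems. -/
structure ObjSysHom (Ω Ω' : ObjSystem) where
  o : Ω.O → Ω'.O
  t : Ω.Ot → Ω'.Ot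
  comm : ∀ x, Ω'.typ (o x) = t (Ω.typ x)

/-- The identity morphism of object systems. -/
def idOS (Ω : ObjSystem) : ObjSysHom Ω Ω := ⟨id, id, fun _ => rfl⟩

/-- The image of an indexed family under a morphism of object systems. -/
def Sig.map {Ω Ω' : ObjSystem} (γ : ObjSysHom Ω Ω') (σ : Sig Ω) : Sig Ω' :=
  ⟨σ.idx, fun i => γ.o (σ.fam i)⟩

/-- A morphism of multicategories lying over a morphism `γ` of object systems. -/
structure MulticatHomOver {Ω Ω' : ObjSystem} {A A' : Type} (γ : ObjSysHom Ω Ω')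
    (M : Multicat Ω A) (N : Multicat Ω' A') where
  arr : A → A'
  map_S : ∀ u, Sig.Eqv (N.S (arr u)) (Sig.map γ (M.S u))
  map_T : ∀ u, N.T (arr u) = γ.t (M.T u)
  map_comp : ∀ u r v, MDef M.S M.T u r v →
    arr (M.comp u r v) = N.comp (arr u) r (arr v)
  map_ide : ∀ x, arr (M.ide x) = N.ide (γ.o x)

/-- `M` is the free multicategory generated over `Ω` by the arrow-indeterminates `J`
(with prescribed sources `Sj` and targets `Tj`), included via `ι` — stated via the
(strong) universal property. -/
def IsFree {Ω : ObjSystem} {A : Type} (J : Type) (Sj : J → Sig Ω) (Tj : J → Ω.Ot)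
    (M : Multicat Ω A) (ι : J → A) : Prop :=
  (∀ f, Sig.Eqv (M.S (ι f)) (Sj f) ∧ M.T (ι f) = Tj f) ∧
  ∀ (Ω' : ObjSystem) (A' : Type) (γ : ObjSysHom Ω Ω') (C : Multicat Ω' A')
    (φ : J → A'),
    (∀ f, Sig.Eqv (C.S (φ f)) (Sig.map γ (Sj f)) ∧ C.T (φ f) = γ.t (Tj f)) →
    ∃! χ : MulticatHomOver γ M C, ∀ f, χ.arr (ι f) = φ f
/-- Occurrence data on a free multicategory: each arrow `u` has a finite indexed
set of occurrences of the generating arrow-indeterminates, with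
`⟦u ⊙_r v⟧ = ⟦u⟧ ⊔ ⟦v⟧` (disjoint union, inclusions as coprojections),
a single occurrence in each indeterminate, and none in identities. -/
structure OccData {Ω : ObjSystem} {A : Type} (M : Multicat Ω A)
    (J : Type) (ι : J → A) where
  oI : A → Finset ℕ
  oF : A → ℕ → J
  occ_ind : ∀ f, ∃ r, oI (ι f) = {r} ∧ oF (ι f) r = f
  occ_ide : ∀ x, oI (M.ide x) = ∅
  occ_comp : ∀ u r v, MDef M.S M.T u r v →
    Disjoint (oI u) (oI v) ∧ oI (M.comp u r v) = oI u ∪ oI v ∧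
    (∀ i ∈ oI u, oF (M.comp u r v) i = oF u i) ∧
    (∀ i ∈ oI v, oF (M.comp u r v) i = oF v i)

/-- Definedness of the arrow replacement `u ▪_r v`: `r` indexes an occurrence of
an indeterminate `f` in `u`, and `v` is parallel to `f` (`Sv = Sf`, `Tv = Tf`). -/
def RDef {Ω : ObjSystem} {A : Type} {M : Multicat Ω A} {J : Type} {ι : J → A}
    (D : OccData M J ι) (u : A) (r : ℕ) (v : A) : Prop :=
  r ∈ D.oI u ∧ Sig.Eqv (M.S v) (M.S (ι (D.oF u r))) ∧
    M.T v = M.T (ι (D.oF u r))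

/-- The characterizing conditions for the system of arrow replacement
operations `▪` on a free multicategory. -/
def IsRepl {Ω : ObjSystem} {A : Type} (M : Multicat Ω A) {J : Type} (ι : J → A)
    (D : OccData M J ι) (rep : A → ℕ → A → A) : Prop :=
  (∀ u r v, RDef D u r v →
      Sig.Eqv (M.S (rep u r v)) (M.S u) ∧ M.T (rep u r v) = M.T u) ∧
  (∀ f r v, D.oI (ι f) = {r} → RDef D (ι f) r v → rep (ι f) r v = v) ∧
  (∀ u j u' r v, MDef M.S M.T u j u' → RDef D (M.comp u j u') r v →
      (r ∈ D.oI u → rep (M.comp u j u') r v = M.comp (rep u r v) j u') ∧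
      (r ∈ D.oI u' → rep (M.comp u j u') r v = M.comp u j (rep u' r v)))
section ReplAux

open scoped Classical

variable {Ω : ObjSystem} {A : Type}

theorem Eqv_refl (σ : Sig Ω) : Sig.Eqv σ σ := ⟨rfl, fun _ _ => rfl⟩

theorem Eqv_trans {σ τ υ : Sig Ω} (h : Sig.Eqv σ τ) (h' : Sig.Eqv τ υ) : Sig.Eqv σ υ :=
  ⟨h.1.trans h'.1, fun i hi => (h.2 i hi).trans (h'.2 i (h.1 ▸ hi))⟩

theorem Eqv_map_id (σ : Sig Ω) : Sig.Eqv (Sig.map (idOS Ω) σ) σ := ⟨rfl, fun _ _ => rfl⟩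

theorem MDef_congr_left (M : Multicat Ω A) {u u' v : A} {r : ℕ}
    (hS : Sig.Eqv (M.S u') (M.S u)) (h : MDef M.S M.T u r v) : MDef M.S M.T u' r v := by
  refine ⟨by rw [hS.1]; exact h.1, ?_, by rw [hS.1]; exact h.2.2⟩
  rw [hS.2 r (by rw [hS.1]; exact h.1)]; exact h.2.1

theorem MDef_congr_right (M : Multicat Ω A) {u v v' : A} {r : ℕ}
    (hS : Sig.Eqv (M.S v') (M.S v)) (hT : M.T v' = M.T v) (h : MDef M.S M.T u r v) :
    MDef M.S M.T u r v' :=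
  ⟨h.1, hT.trans h.2.1, by rw [hS.1]; exact h.2.2⟩

theorem comp_congr_left (M : Multicat Ω A) {u u' v : A} {r : ℕ}
    (hS : Sig.Eqv (M.S u') (M.S u)) (hT : M.T u' = M.T u) (h : MDef M.S M.T u r v) :
    Sig.Eqv (M.S (M.comp u' r v)) (M.S (M.comp u r v)) ∧
      M.T (M.comp u' r v) = M.T (M.comp u r v) := by
  have h' : MDef M.S M.T u' r v := MDef_congr_left M hS h
  refine ⟨⟨by rw [M.S_comp_idx u r v h, M.S_comp_idx u' r v h', hS.1], ?_⟩,
    by rw [M.T_comp u r v h, M.T_comp u' r v h', hT]⟩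
  intro i hi
  rw [M.S_comp_idx u' r v h'] at hi
  rcases Finset.mem_union.1 hi with hi | hi
  · have hiu : i ∈ (M.S u).idx.erase r := by rw [← hS.1]; exact hi
    rw [(M.S_comp_fam u' r v h' i).2 hi, (M.S_comp_fam u r v h i).2 hiu]
    exact hS.2 i (Finset.mem_of_mem_erase hi)
  · rw [(M.S_comp_fam u' r v h' i).1 hi, (M.S_comp_fam u r v h i).1 hi]

theorem comp_congr_right (M : Multicat Ω A) {u v v' : A} {r : ℕ}
    (hS : Sig.Eqv (M.S v') (M.S v)) (hT : M.T v' = M.T v) (h : MDef M.S M.T u r v) :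
    Sig.Eqv (M.S (M.comp u r v')) (M.S (M.comp u r v)) ∧
      M.T (M.comp u r v') = M.T (M.comp u r v) := by
  have h' : MDef M.S M.T u r v' := MDef_congr_right M hS hT h
  refine ⟨⟨by rw [M.S_comp_idx u r v h, M.S_comp_idx u r v' h', hS.1], ?_⟩,
    by rw [M.T_comp u r v h, M.T_comp u r v' h']⟩
  intro i hi
  rw [M.S_comp_idx u r v' h'] at hi
  rcases Finset.mem_union.1 hi with hi | hi
  · rw [(M.S_comp_fam u r v' h' i).2 hi, (M.S_comp_fam u r v h i).2 hi]
  · have hiv : i ∈ (M.S v).idx := by rw [← hS.1]; exact hi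
    rw [(M.S_comp_fam u r v' h' i).1 hi, (M.S_comp_fam u r v h i).1 hiv]
    exact hS.2 i hi

theorem RDef_comp_l {M : Multicat Ω A} {J : Type} {ι : J → A} (D : OccData M J ι)
    {u w v : A} {j r : ℕ} (h : MDef M.S M.T u j w) (hr : r ∈ D.oI u)
    (hR : RDef D (M.comp u j w) r v) : RDef D u r v := by
  have hf := (D.occ_comp u j w h).2.2.1 r hr
  exact ⟨hr, by rw [← hf]; exact hR.2.1, by rw [← hf]; exact hR.2.2⟩

theorem RDef_comp_r {M : Multicat Ω A} {J : Type} {ι : J → A} (D : OccData M J ι)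
    {u w v : A} {j r : ℕ} (h : MDef M.S M.T u j w) (hr : r ∈ D.oI w)
    (hR : RDef D (M.comp u j w) r v) : RDef D w r v := by
  have hf := (D.occ_comp u j w h).2.2.2 r hr
  exact ⟨hr, by rw [← hf]; exact hR.2.1, by rw [← hf]; exact hR.2.2⟩

/-- The sub-multicategory on a predicate closed under identities and composition. -/
noncomputable def SubMC (M : Multicat Ω A) (P : A → Prop) (hide : ∀ x, P (M.ide x))
    (hcomp : ∀ u r v, MDef M.S M.T u r v → P u → P v → P (M.comp u r v)) :
    Multicat Ω {a : A // P a} where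
  S p := M.S p.1
  T p := M.T p.1
  comp p r q := if h : MDef M.S M.T p.1 r q.1 then
    ⟨M.comp p.1 r q.1, hcomp _ _ _ h p.2 q.2⟩ else p
  ide x := ⟨M.ide x, hide x⟩
  S_ide x := M.S_ide x
  T_ide x := M.T_ide x
  T_comp u r v h := by
    have h' : MDef M.S M.T u.1 r v.1 := h
    simp only [dif_pos h']
    exact M.T_comp _ _ _ h'
  S_comp_idx u r v h := by
    have h' : MDef M.S M.T u.1 r v.1 := h
    simp only [dif_pos h']
    exact M.S_comp_idx _ _ _ h'
  S_comp_fam u r v h := by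
    have h' : MDef M.S M.T u.1 r v.1 := h
    simp only [dif_pos h']
    exact M.S_comp_fam _ _ _ h'
  id_left x u r h := by
    have h' : MDef M.S M.T (M.ide x) r u.1 := h
    simp only [dif_pos h']
    exact Subtype.ext (M.id_left x u.1 r h')
  id_right u r x h1 h2 h := by
    have h' : MDef M.S M.T u.1 r (M.ide x) := h
    simp only [dif_pos h']
    exact Subtype.ext (M.id_right u.1 r x h1 h2 h')
  mcomm u r v q w hne h1 h2 h3 h4 := by
    have h1' : MDef M.S M.T u.1 r v.1 := h1
    have h2' : MDef M.S M.T u.1 q w.1 := h2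
    simp only [dif_pos h1', dif_pos h2'] at h3 h4 ⊢
    have h3' : MDef M.S M.T (M.comp u.1 r v.1) q w.1 := h3
    have h4' : MDef M.S M.T (M.comp u.1 q w.1) r v.1 := h4
    simp only [dif_pos h3', dif_pos h4']
    exact Subtype.ext (M.mcomm _ _ _ _ _ hne h1' h2' h3' h4')
  massoc u r v q w h1 hq h2 h3 h4 := by
    have h1' : MDef M.S M.T u.1 r v.1 := h1
    have h2' : MDef M.S M.T v.1 q w.1 := h2
    simp only [dif_pos h1', dif_pos h2'] at h3 h4 ⊢
    have h3' : MDef M.S M.T (M.comp u.1 r v.1) q w.1 := h3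
    have h4' : MDef M.S M.T u.1 r (M.comp v.1 q w.1) := h4
    simp only [dif_pos h3', dif_pos h4']
    exact Subtype.ext (M.massoc _ _ _ _ _ h1' hq h2' h3' h4')

/-- Induction principle for free multicategories. -/
theorem free_ind {J : Type} {Sj : J → Sig Ω} {Tj : J → Ω.Ot} {M : Multicat Ω A} {ι : J → A}
    (hfree : IsFree J Sj Tj M ι) (P : A → Prop) (hgen : ∀ f, P (ι f))
    (hide : ∀ x, P (M.ide x))
    (hcomp : ∀ u r v, MDef M.S M.T u r v → P u → P v → P (M.comp u r v)) :
    ∀ a, P a := by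
  obtain ⟨h1, h2⟩ := hfree
  have hcond : ∀ f, Sig.Eqv (M.S (ι f)) (Sig.map (idOS Ω) (Sj f)) ∧
      M.T (ι f) = (idOS Ω).t (Tj f) := fun f => ⟨⟨(h1 f).1.1, (h1 f).1.2⟩, (h1 f).2⟩
  obtain ⟨χ, hχ, -⟩ := h2 Ω {a // P a} (idOS Ω) (SubMC M P hide hcomp)
      (fun f => ⟨ι f, hgen f⟩) (fun f => hcond f)
  obtain ⟨χ₀, -, huniq⟩ := h2 Ω A (idOS Ω) M ι hcond
  have hSu : ∀ u, Sig.Eqv (M.S (χ.arr u).1) (M.S u) :=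
    fun u => Eqv_trans (χ.map_S u) (Eqv_map_id (M.S u))
  have hTu : ∀ u, M.T (χ.arr u).1 = M.T u := fun u => χ.map_T u
  let ψ : MulticatHomOver (idOS Ω) M M :=
    { arr := fun a => (χ.arr a).1
      map_S := fun u => χ.map_S u
      map_T := fun u => χ.map_T u
      map_comp := fun u r v h => by
        have h' : MDef M.S M.T (χ.arr u).1 r (χ.arr v).1 :=
          MDef_congr_left M (hSu u) (MDef_congr_right M (hSu v) (hTu v) h)
        have := congrArg Subtype.val (χ.map_comp u r v h)
        simp only [SubMC, dif_pos h'] at this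
        exact this
      map_ide := fun x => congrArg Subtype.val (χ.map_ide x) }
  let idm : MulticatHomOver (idOS Ω) M M :=
    { arr := id
      map_S := fun u => ⟨rfl, fun _ _ => rfl⟩
      map_T := fun _ => rfl
      map_comp := fun _ _ _ _ => rfl
      map_ide := fun _ => rfl }
  have e1 : ψ = χ₀ := huniq ψ (fun f => congrArg Subtype.val (hχ f))
  have e2 : idm = χ₀ := huniq idm (fun f => rfl)
  intro a
  have hval : (χ.arr a).1 = a :=
    congrArg (fun (χ' : MulticatHomOver (idOS Ω) M M) => χ'.arr a) (e1.trans e2.symm)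
  rw [← hval]; exact (χ.arr a).2

end ReplAux
section ReplAux2

open scoped Classical

variable {Ω : ObjSystem} {A : Type}

/-- The invariant for arrows of the auxiliary multicategory of pairs. -/
def Good (M : Multicat Ω A) {J : Type} {ι : J → A} (D : OccData M J ι)
    (p : A × (ℕ → A → A)) : Prop :=
  ∀ r v, (RDef D p.1 r v →
      Sig.Eqv (M.S (p.2 r v)) (M.S p.1) ∧ M.T (p.2 r v) = M.T p.1) ∧
    (¬ RDef D p.1 r v → p.2 r v = p.1)

/-- The replacement function attached to a composite. -/
noncomputable def rfun (M : Multicat Ω A) {J : Type} {ι : J → A} (D : OccData M J ι)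
    (p q : A × (ℕ → A → A)) (j : ℕ) (r : ℕ) (v : A) : A :=
  if MDef M.S M.T p.1 j q.1 ∧ RDef D (M.comp p.1 j q.1) r v then
    (if r ∈ D.oI p.1 then M.comp (p.2 r v) j q.1 else M.comp p.1 j (q.2 r v))
  else M.comp p.1 j q.1

theorem good_rfun (M : Multicat Ω A) {J : Type} {ι : J → A} (D : OccData M J ι)
    {p q : A × (ℕ → A → A)} (hp : Good M D p) (hq : Good M D q) (j : ℕ) :
    Good M D (M.comp p.1 j q.1, rfun M D p q j) := by
  intro r v
  constructor
  · intro hR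
    show Sig.Eqv (M.S (rfun M D p q j r v)) _ ∧ M.T (rfun M D p q j r v) = _
    by_cases hm : MDef M.S M.T p.1 j q.1
    · rw [rfun, if_pos ⟨hm, hR⟩]
      obtain ⟨hdisj, hunion, hfl, hfr⟩ := D.occ_comp p.1 j q.1 hm
      by_cases hru : r ∈ D.oI p.1
      · rw [if_pos hru]
        have hRp : RDef D p.1 r v := RDef_comp_l D hm hru hR
        exact comp_congr_left M ((hp r v).1 hRp).1 ((hp r v).1 hRp).2 hm
      · rw [if_neg hru]
        have hrq : r ∈ D.oI q.1 := by
          have h0 := hR.1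
          rw [hunion] at h0
          exact (Finset.mem_union.1 h0).resolve_left hru
        have hRq : RDef D q.1 r v := RDef_comp_r D hm hrq hR
        exact comp_congr_right M ((hq r v).1 hRq).1 ((hq r v).1 hRq).2 hm
    · rw [rfun, if_neg (fun h => hm h.1)]
      exact ⟨Eqv_refl _, rfl⟩
  · intro hR
    show rfun M D p q j r v = _
    rw [rfun, if_neg (fun h => hR h.2)]

theorem good_ide (M : Multicat Ω A) {J : Type} {ι : J → A} (D : OccData M J ι)
    (x : Ω.O) : Good M D (M.ide x, fun _ _ => M.ide x) := by
  intro r v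
  refine ⟨fun hR => absurd hR.1 ?_, fun _ => rfl⟩
  rw [D.occ_ide x]
  exact Finset.notMem_empty r

/-- The auxiliary multicategory of arrows paired with replacement functions. -/
noncomputable def CMC (M : Multicat Ω A) {J : Type} {ι : J → A} (D : OccData M J ι) :
    Multicat Ω {p : A × (ℕ → A → A) // Good M D p} where
  S p := M.S p.1.1
  T p := M.T p.1.1
  comp p j q := ⟨(M.comp p.1.1 j q.1.1, rfun M D p.1 q.1 j), good_rfun M D p.2 q.2 j⟩
  ide x := ⟨(M.ide x, fun _ _ => M.ide x), good_ide M D x⟩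
  S_ide x := M.S_ide x
  T_ide x := M.T_ide x
  T_comp u r v h := M.T_comp u.1.1 r v.1.1 h
  S_comp_idx u r v h := M.S_comp_idx u.1.1 r v.1.1 h
  S_comp_fam u r v h := M.S_comp_fam u.1.1 r v.1.1 h
  id_left x u r h := by
    have h' : MDef M.S M.T (M.ide x) r u.1.1 := h
    have hc : M.comp (M.ide x) r u.1.1 = u.1.1 := M.id_left x u.1.1 r h'
    apply Subtype.ext
    apply Prod.ext
    · exact hc
    · funext r' v
      show rfun M D (M.ide x, fun _ _ => M.ide x) u.1 r r' v = u.1.2 r' v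
      rw [rfun]
      simp only [hc]
      by_cases hR : RDef D u.1.1 r' v
      · rw [if_pos ⟨h', hR⟩, if_neg (by rw [D.occ_ide x]; exact Finset.notMem_empty r')]
        exact M.id_left x (u.1.2 r' v) r
          (MDef_congr_right M ((u.2 r' v).1 hR).1 ((u.2 r' v).1 hR).2 h')
      · rw [if_neg (fun hcon => hR hcon.2)]
        exact ((u.2 r' v).2 hR).symm
  id_right u r x hfam hidx h := by
    have h' : MDef M.S M.T u.1.1 r (M.ide x) := h
    have hc : M.comp u.1.1 r (M.ide x) = u.1.1 := M.id_right u.1.1 r x hfam hidx h'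
    apply Subtype.ext
    apply Prod.ext
    · exact hc
    · funext r' v
      show rfun M D u.1 (M.ide x, fun _ _ => M.ide x) r r' v = u.1.2 r' v
      rw [rfun]
      simp only [hc]
      by_cases hR : RDef D u.1.1 r' v
      · rw [if_pos ⟨h', hR⟩, if_pos hR.1]
        have hE := (u.2 r' v).1 hR
        refine M.id_right (u.1.2 r' v) r x ?_ hidx (MDef_congr_left M hE.1 h')
        rw [hE.1.2 r (by rw [hE.1.1]; exact h'.1)]
        exact hfam
      · rw [if_neg (fun hcon => hR hcon.2)]
        exact ((u.2 r' v).2 hR).symm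
  mcomm u r v q w hne h1 h2 h3 h4 := by
    have h1' : MDef M.S M.T u.1.1 r v.1.1 := h1
    have h2' : MDef M.S M.T u.1.1 q w.1.1 := h2
    have h3' : MDef M.S M.T (M.comp u.1.1 r v.1.1) q w.1.1 := h3
    have h4' : MDef M.S M.T (M.comp u.1.1 q w.1.1) r v.1.1 := h4
    have E : M.comp (M.comp u.1.1 r v.1.1) q w.1.1
        = M.comp (M.comp u.1.1 q w.1.1) r v.1.1 := M.mcomm _ _ _ _ _ hne h1' h2' h3' h4'
    obtain ⟨duv, muv, -, -⟩ := D.occ_comp u.1.1 r v.1.1 h1'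
    obtain ⟨duw, muw, -, -⟩ := D.occ_comp u.1.1 q w.1.1 h2'
    obtain ⟨dL, mL, -, -⟩ := D.occ_comp (M.comp u.1.1 r v.1.1) q w.1.1 h3'
    obtain ⟨dR, mR, -, -⟩ := D.occ_comp (M.comp u.1.1 q w.1.1) r v.1.1 h4'
    rw [muv] at dL
    apply Subtype.ext
    apply Prod.ext
    · exact E
    · funext r' x
      show rfun M D (M.comp u.1.1 r v.1.1, rfun M D u.1 v.1 r) w.1 q r' x
        = rfun M D (M.comp u.1.1 q w.1.1, rfun M D u.1 w.1 q) v.1 r r' x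
      by_cases hR : RDef D (M.comp (M.comp u.1.1 r v.1.1) q w.1.1) r' x
      · have hRR : RDef D (M.comp (M.comp u.1.1 q w.1.1) r v.1.1) r' x := by
          rw [← E]; exact hR
        rw [rfun, rfun]
        dsimp only
        have g1 : MDef M.S M.T (M.comp u.1.1 r v.1.1) q w.1.1 ∧
            RDef D (M.comp (M.comp u.1.1 r v.1.1) q w.1.1) r' x := ⟨h3', hR⟩
        have g2 : MDef M.S M.T (M.comp u.1.1 q w.1.1) r v.1.1 ∧
            RDef D (M.comp (M.comp u.1.1 q w.1.1) r v.1.1) r' x := ⟨h4', hRR⟩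
        rw [if_pos g1, if_pos g2]
        have hmem := hR.1
        rw [mL, muv] at hmem
        rcases Finset.mem_union.1 hmem with hmem | hrw
        · rcases Finset.mem_union.1 hmem with hru | hrv
          · have hL1 : r' ∈ D.oI (M.comp u.1.1 r v.1.1) := by
              rw [muv]; exact Finset.mem_union_left _ hru
            have hR1 : RDef D (M.comp u.1.1 r v.1.1) r' x := RDef_comp_l D h3' hL1 hR
            have hL2 : r' ∈ D.oI (M.comp u.1.1 q w.1.1) := by
              rw [muw]; exact Finset.mem_union_left _ hru
            have hR2 : RDef D (M.comp u.1.1 q w.1.1) r' x := RDef_comp_l D h4' hL2 hRR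
            have g3 : MDef M.S M.T u.1.1 r v.1.1 ∧
                RDef D (M.comp u.1.1 r v.1.1) r' x := ⟨h1', hR1⟩
            have g4 : MDef M.S M.T u.1.1 q w.1.1 ∧
                RDef D (M.comp u.1.1 q w.1.1) r' x := ⟨h2', hR2⟩
            rw [if_pos hL1, if_pos hL2, rfun, rfun, if_pos g3, if_pos g4, if_pos hru, if_pos hru]
            have hRu : RDef D u.1.1 r' x := RDef_comp_l D h1' hru hR1
            have hE := (u.2 r' x).1 hRu
            exact M.mcomm _ _ _ _ _ hne (MDef_congr_left M hE.1 h1')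
              (MDef_congr_left M hE.1 h2')
              (MDef_congr_left M (comp_congr_left M hE.1 hE.2 h1').1 h3')
              (MDef_congr_left M (comp_congr_left M hE.1 hE.2 h2').1 h4')
          · have hnu : r' ∉ D.oI u.1.1 := Finset.disjoint_right.1 duv hrv
            have hnw : r' ∉ D.oI w.1.1 :=
              Finset.disjoint_left.1 dL (Finset.mem_union_right _ hrv)
            have hL1 : r' ∈ D.oI (M.comp u.1.1 r v.1.1) := by
              rw [muv]; exact Finset.mem_union_right _ hrv
            have hR1 : RDef D (M.comp u.1.1 r v.1.1) r' x := RDef_comp_l D h3' hL1 hR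
            have hL2 : r' ∉ D.oI (M.comp u.1.1 q w.1.1) := by
              rw [muw]
              exact fun hc => (Finset.mem_union.1 hc).elim hnu hnw
            have g3 : MDef M.S M.T u.1.1 r v.1.1 ∧
                RDef D (M.comp u.1.1 r v.1.1) r' x := ⟨h1', hR1⟩
            rw [if_pos hL1, if_neg hL2, rfun, if_pos g3, if_neg hnu]
            have hRv : RDef D v.1.1 r' x := RDef_comp_r D h1' hrv hR1
            have hE := (v.2 r' x).1 hRv
            exact M.mcomm _ _ _ _ _ hne (MDef_congr_right M hE.1 hE.2 h1') h2'
              (MDef_congr_left M (comp_congr_right M hE.1 hE.2 h1').1 h3')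
              (MDef_congr_right M hE.1 hE.2 h4')
        · have hnu : r' ∉ D.oI u.1.1 :=
            fun hc => Finset.disjoint_left.1 dL (Finset.mem_union_left _ hc) hrw
          have hnv : r' ∉ D.oI v.1.1 :=
            fun hc => Finset.disjoint_left.1 dL (Finset.mem_union_right _ hc) hrw
          have hL1 : r' ∉ D.oI (M.comp u.1.1 r v.1.1) := by
            rw [muv]
            exact fun hc => (Finset.mem_union.1 hc).elim hnu hnv
          have hL2 : r' ∈ D.oI (M.comp u.1.1 q w.1.1) := by
            rw [muw]; exact Finset.mem_union_right _ hrw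
          have hR2 : RDef D (M.comp u.1.1 q w.1.1) r' x := RDef_comp_l D h4' hL2 hRR
          have g3 : MDef M.S M.T u.1.1 q w.1.1 ∧
              RDef D (M.comp u.1.1 q w.1.1) r' x := ⟨h2', hR2⟩
          rw [if_neg hL1, if_pos hL2, rfun, if_pos g3, if_neg hnu]
          have hRw : RDef D w.1.1 r' x := RDef_comp_r D h2' hrw hR2
          have hE := (w.2 r' x).1 hRw
          exact M.mcomm _ _ _ _ _ hne h1' (MDef_congr_right M hE.1 hE.2 h2')
            (MDef_congr_right M hE.1 hE.2 h3')
            (MDef_congr_left M (comp_congr_right M hE.1 hE.2 h2').1 h4')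
      · have hRR : ¬ RDef D (M.comp (M.comp u.1.1 q w.1.1) r v.1.1) r' x := by
          rw [← E]; exact hR
        rw [rfun, rfun]
        dsimp only
        rw [if_neg (fun hc => hR hc.2), if_neg (fun hc => hRR hc.2)]
        exact E
  massoc u r v q w h1 hq h2 h3 h4 := by
    have h1' : MDef M.S M.T u.1.1 r v.1.1 := h1
    have h2' : MDef M.S M.T v.1.1 q w.1.1 := h2
    have h3' : MDef M.S M.T (M.comp u.1.1 r v.1.1) q w.1.1 := h3
    have h4' : MDef M.S M.T u.1.1 r (M.comp v.1.1 q w.1.1) := h4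
    have hq' : q ∈ (M.S v.1.1).idx := hq
    have E : M.comp (M.comp u.1.1 r v.1.1) q w.1.1
        = M.comp u.1.1 r (M.comp v.1.1 q w.1.1) := M.massoc _ _ _ _ _ h1' hq' h2' h3' h4'
    obtain ⟨duv, muv, -, -⟩ := D.occ_comp u.1.1 r v.1.1 h1'
    obtain ⟨dvw, mvw, -, -⟩ := D.occ_comp v.1.1 q w.1.1 h2'
    obtain ⟨dL, mL, -, -⟩ := D.occ_comp (M.comp u.1.1 r v.1.1) q w.1.1 h3'
    obtain ⟨dR, mR, -, -⟩ := D.occ_comp u.1.1 r (M.comp v.1.1 q w.1.1) h4'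
    rw [muv] at dL
    apply Subtype.ext
    apply Prod.ext
    · exact E
    · funext r' x
      show rfun M D (M.comp u.1.1 r v.1.1, rfun M D u.1 v.1 r) w.1 q r' x
        = rfun M D u.1 (M.comp v.1.1 q w.1.1, rfun M D v.1 w.1 q) r r' x
      by_cases hR : RDef D (M.comp (M.comp u.1.1 r v.1.1) q w.1.1) r' x
      · have hRR : RDef D (M.comp u.1.1 r (M.comp v.1.1 q w.1.1)) r' x := by
          rw [← E]; exact hR
        rw [rfun, rfun]
        dsimp only
        have g1 : MDef M.S M.T (M.comp u.1.1 r v.1.1) q w.1.1 ∧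
            RDef D (M.comp (M.comp u.1.1 r v.1.1) q w.1.1) r' x := ⟨h3', hR⟩
        have g2 : MDef M.S M.T u.1.1 r (M.comp v.1.1 q w.1.1) ∧
            RDef D (M.comp u.1.1 r (M.comp v.1.1 q w.1.1)) r' x := ⟨h4', hRR⟩
        rw [if_pos g1, if_pos g2]
        have hmem := hR.1
        rw [mL, muv] at hmem
        rcases Finset.mem_union.1 hmem with hmem | hrw
        · rcases Finset.mem_union.1 hmem with hru | hrv
          · have hL1 : r' ∈ D.oI (M.comp u.1.1 r v.1.1) := by
              rw [muv]; exact Finset.mem_union_left _ hru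
            have hR1 : RDef D (M.comp u.1.1 r v.1.1) r' x := RDef_comp_l D h3' hL1 hR
            have g3 : MDef M.S M.T u.1.1 r v.1.1 ∧
                RDef D (M.comp u.1.1 r v.1.1) r' x := ⟨h1', hR1⟩
            rw [if_pos hL1, if_pos hru, rfun, if_pos g3, if_pos hru]
            have hRu : RDef D u.1.1 r' x := RDef_comp_l D h1' hru hR1
            have hE := (u.2 r' x).1 hRu
            exact M.massoc _ _ _ _ _ (MDef_congr_left M hE.1 h1') hq' h2'
              (MDef_congr_left M (comp_congr_left M hE.1 hE.2 h1').1 h3')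
              (MDef_congr_left M hE.1 h4')
          · have hnu : r' ∉ D.oI u.1.1 := Finset.disjoint_right.1 duv hrv
            have hL1 : r' ∈ D.oI (M.comp u.1.1 r v.1.1) := by
              rw [muv]; exact Finset.mem_union_right _ hrv
            have hR1 : RDef D (M.comp u.1.1 r v.1.1) r' x := RDef_comp_l D h3' hL1 hR
            have hL2 : r' ∈ D.oI (M.comp v.1.1 q w.1.1) := by
              rw [mvw]; exact Finset.mem_union_left _ hrv
            have hR3 : RDef D (M.comp v.1.1 q w.1.1) r' x := RDef_comp_r D h4' hL2 hRR
            have g3 : MDef M.S M.T u.1.1 r v.1.1 ∧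
                RDef D (M.comp u.1.1 r v.1.1) r' x := ⟨h1', hR1⟩
            have g4 : MDef M.S M.T v.1.1 q w.1.1 ∧
                RDef D (M.comp v.1.1 q w.1.1) r' x := ⟨h2', hR3⟩
            rw [if_pos hL1, if_neg hnu, rfun, rfun, if_pos g3, if_neg hnu, if_pos g4, if_pos hrv]
            have hRv : RDef D v.1.1 r' x := RDef_comp_r D h1' hrv hR1
            have hE := (v.2 r' x).1 hRv
            refine M.massoc _ _ _ _ _ (MDef_congr_right M hE.1 hE.2 h1')
              (by rw [hE.1.1]; exact hq') (MDef_congr_left M hE.1 h2')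
              (MDef_congr_left M (comp_congr_right M hE.1 hE.2 h1').1 h3')
              (MDef_congr_right M (comp_congr_left M hE.1 hE.2 h2').1
                (comp_congr_left M hE.1 hE.2 h2').2 h4')
        · have hnu : r' ∉ D.oI u.1.1 :=
            fun hc => Finset.disjoint_left.1 dL (Finset.mem_union_left _ hc) hrw
          have hnv : r' ∉ D.oI v.1.1 :=
            fun hc => Finset.disjoint_left.1 dL (Finset.mem_union_right _ hc) hrw
          have hL1 : r' ∉ D.oI (M.comp u.1.1 r v.1.1) := by
            rw [muv]
            exact fun hc => (Finset.mem_union.1 hc).elim hnu hnv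
          have hL2 : r' ∈ D.oI (M.comp v.1.1 q w.1.1) := by
            rw [mvw]; exact Finset.mem_union_right _ hrw
          have hR3 : RDef D (M.comp v.1.1 q w.1.1) r' x := RDef_comp_r D h4' hL2 hRR
          have g3 : MDef M.S M.T v.1.1 q w.1.1 ∧
              RDef D (M.comp v.1.1 q w.1.1) r' x := ⟨h2', hR3⟩
          rw [if_neg hL1, if_neg hnu, rfun, if_pos g3, if_neg hnv]
          have hRw : RDef D w.1.1 r' x := RDef_comp_r D h2' hrw hR3
          have hE := (w.2 r' x).1 hRw
          exact M.massoc _ _ _ _ _ h1' hq' (MDef_congr_right M hE.1 hE.2 h2')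
            (MDef_congr_right M hE.1 hE.2 h3')
            (MDef_congr_right M (comp_congr_right M hE.1 hE.2 h2').1
              (comp_congr_right M hE.1 hE.2 h2').2 h4')
      · have hRR : ¬ RDef D (M.comp u.1.1 r (M.comp v.1.1 q w.1.1)) r' x := by
          rw [← E]; exact hR
        rw [rfun, rfun]
        dsimp only
        rw [if_neg (fun hc => hR hc.2), if_neg (fun hc => hRR hc.2)]
        exact E

/-- The generators of the auxiliary multicategory. -/
noncomputable def genArr (M : Multicat Ω A) {J : Type} {ι : J → A} (D : OccData M J ι)
    (f : J) : {p : A × (ℕ → A → A) // Good M D p} :=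
  ⟨(ι f, fun r v => if RDef D (ι f) r v then v else ι f), by
    intro r v
    constructor
    · intro hR
      obtain ⟨r₀, hI, hF⟩ := D.occ_ind f
      have hr : r = r₀ := by
        have h0 : r ∈ D.oI (ι f) := hR.1
        rw [hI] at h0
        exact Finset.mem_singleton.1 h0
      have hF' : D.oF (ι f) r = f := by rw [hr]; exact hF
      have e1 : Sig.Eqv (M.S v) (M.S (ι f)) := by rw [← hF']; exact hR.2.1
      have e2 : M.T v = M.T (ι f) := by rw [← hF']; exact hR.2.2
      show Sig.Eqv (M.S (if RDef D (ι f) r v then v else ι f)) (M.S (ι f)) ∧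
        M.T (if RDef D (ι f) r v then v else ι f) = M.T (ι f)
      rw [if_pos (show RDef D (ι f) r v from hR)]
      exact ⟨e1, e2⟩
    · intro hR
      show (if RDef D (ι f) r v then v else ι f) = ι f
      rw [if_neg (show ¬ RDef D (ι f) r v from hR)]⟩

end ReplAux2

/-- Existence and uniqueness of the system of arrow replacement operations
`u ▪_r v` on a free multicategory `Ω[J]`, characterized by: (1) `u ▪_r v` is
defined for `v` parallel to the indeterminate occurring at `r`, and then has
the source and target of `u`; (2) `f ▪_r v = v` for `f ∈ J`; (3) replacement
is computed recursively through multicompositions. -/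
theorem stmt6 (Ω : ObjSystem) (A : Type) (J : Type)
    (Sj : J → Sig Ω) (Tj : J → Ω.Ot)
    (M : Multicat Ω A) (ι : J → A) (hfree : IsFree J Sj Tj M ι)
    (D : OccData M J ι) :
    ∃ rep : A → ℕ → A → A, IsRepl M ι D rep ∧
      ∀ rep', IsRepl M ι D rep' →
        ∀ u r v, RDef D u r v → rep' u r v = rep u r v := by
  classical
  have hcond : ∀ f, Sig.Eqv ((CMC M D).S (genArr M D f)) (Sig.map (idOS Ω) (Sj f)) ∧
      (CMC M D).T (genArr M D f) = (idOS Ω).t (Tj f) := fun f =>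
    ⟨⟨(hfree.1 f).1.1, (hfree.1 f).1.2⟩, (hfree.1 f).2⟩
  obtain ⟨χ, hχ, -⟩ := hfree.2 Ω _ (idOS Ω) (CMC M D) (genArr M D) hcond
  have hfix : ∀ u, (χ.arr u).1.1 = u := by
    apply free_ind hfree (fun u => (χ.arr u).1.1 = u)
    · intro f
      rw [hχ f]
      rfl
    · intro x
      rw [χ.map_ide x]
      rfl
    · intro u r v h hu hv
      rw [χ.map_comp u r v h]
      show M.comp (χ.arr u).1.1 r (χ.arr v).1.1 = M.comp u r v
      rw [hu, hv]
  refine ⟨fun u r v => (χ.arr u).1.2 r v, ⟨?_, ?_, ?_⟩, ?_⟩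
  · intro u r v hR
    have hR' : RDef D (χ.arr u).1.1 r v := by rw [hfix u]; exact hR
    have h0 := ((χ.arr u).2 r v).1 hR'
    rw [hfix u] at h0
    exact h0
  · intro f r v hIdx hR
    show (χ.arr (ι f)).1.2 r v = v
    rw [hχ f]
    show (if RDef D (ι f) r v then v else ι f) = v
    rw [if_pos hR]
  · intro u j u' r v h hR
    have hcmp := χ.map_comp u j u' h
    have key : (χ.arr (M.comp u j u')).1.2 r v =
        if MDef M.S M.T (χ.arr u).1.1 j (χ.arr u').1.1 ∧
           RDef D (M.comp (χ.arr u).1.1 j (χ.arr u').1.1) r v then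
          (if r ∈ D.oI (χ.arr u).1.1 then M.comp ((χ.arr u).1.2 r v) j (χ.arr u').1.1
           else M.comp (χ.arr u).1.1 j ((χ.arr u').1.2 r v))
        else M.comp (χ.arr u).1.1 j (χ.arr u').1.1 := by
      rw [hcmp]
      show rfun M D (χ.arr u).1 (χ.arr u').1 j r v = _
      rw [rfun]
    rw [hfix u, hfix u'] at key
    have g1 : MDef M.S M.T u j u' ∧ RDef D (M.comp u j u') r v := ⟨h, hR⟩
    show (r ∈ D.oI u → (χ.arr (M.comp u j u')).1.2 r v = M.comp ((χ.arr u).1.2 r v) j u') ∧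
      (r ∈ D.oI u' → (χ.arr (M.comp u j u')).1.2 r v = M.comp u j ((χ.arr u').1.2 r v))
    rw [key, if_pos g1]
    obtain ⟨hdisj, -, -, -⟩ := D.occ_comp u j u' h
    constructor
    · intro hru; rw [if_pos hru]
    · intro hru'; rw [if_neg (Finset.disjoint_right.1 hdisj hru')]
  · intro rep' hrep'
    have main : ∀ u, (fun u => ∀ r v, RDef D u r v → rep' u r v = (χ.arr u).1.2 r v) u := by
      apply free_ind hfree
      · intro f r v hR
        obtain ⟨r₀, hI, -⟩ := D.occ_ind f
        have hr : r = r₀ := by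
          have h0 := hR.1
          rw [hI] at h0
          exact Finset.mem_singleton.1 h0
        have hI' : D.oI (ι f) = {r} := by rw [hr]; exact hI
        rw [hrep'.2.1 f r v hI' hR]
        rw [hχ f]
        show v = if RDef D (ι f) r v then v else ι f
        rw [if_pos hR]
      · intro x r v hR
        exact absurd hR.1 (by rw [D.occ_ide x]; exact Finset.notMem_empty r)
      · intro u j u' h IHu IHu' r v hR
        obtain ⟨hdisj, hun, -, -⟩ := D.occ_comp u j u' h
        have hmem := hR.1
        rw [hun] at hmem
        have hcmp := χ.map_comp u j u' h
        have key : (χ.arr (M.comp u j u')).1.2 r v =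
            if MDef M.S M.T (χ.arr u).1.1 j (χ.arr u').1.1 ∧
               RDef D (M.comp (χ.arr u).1.1 j (χ.arr u').1.1) r v then
              (if r ∈ D.oI (χ.arr u).1.1 then M.comp ((χ.arr u).1.2 r v) j (χ.arr u').1.1
               else M.comp (χ.arr u).1.1 j ((χ.arr u').1.2 r v))
            else M.comp (χ.arr u).1.1 j (χ.arr u').1.1 := by
          rw [hcmp]
          show rfun M D (χ.arr u).1 (χ.arr u').1 j r v = _
          rw [rfun]
        rw [hfix u, hfix u'] at key
        have g1 : MDef M.S M.T u j u' ∧ RDef D (M.comp u j u') r v := ⟨h, hR⟩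
        rw [key, if_pos g1]
        rcases Finset.mem_union.1 hmem with hru | hru'
        · rw [if_pos hru, (hrep'.2.2 u j u' r v h hR).1 hru,
            IHu r v (RDef_comp_l D h hru hR)]
        · rw [if_neg (Finset.disjoint_right.1 hdisj hru'),
            (hrep'.2.2 u j u' r v h hR).2 hru',
            IHu' r v (RDef_comp_r D h hru' hR)]
    intro u r v hR
    exact main u r v hR
end

section
/- Let C be the equational deduction system for composition terms over an (n−1)-category A with n-indeterminates I. If ⊢ t = s is provable in C, then: (a) dt = ds and ct = cs; (b) an indeterminate x ∈ I occurs in t if and only if it occurs in s. Consequently, for distinct indeterminates x ≠ y in I, the equation x = y is not provable, so distinct indeterminates represent distinct n-cells in the free extension A[I]. -/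
/-- A globular higher-categorical cell structure: cells of all dimensions,
with domain (`src`), codomain (`tgt`), identity (`ide`) and, for each `k`,
binary composition at level `k` (a total operation; the laws below are
conditioned on the definedness conditions). For `u` of dimension `0`, we set
`src u = tgt u = u`. -/
structure OmegaCat : Type 1 where
  cell : Type
  dim : cell → ℕ
  src : cell → cell
  tgt : cell → cell
  ide : cell → cell
  comp : ℕ → cell → cell → cell

namespace OmegaCat

/-- The iterated domain `d^{(k)} u` of a cell `u` of dimension `≥ k`. -/
def srcAt (X : OmegaCat) (k : ℕ) (u : X.cell) : X.cell := X.src^[X.dim u - k] u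

/-- The iterated codomain `c^{(k)} u` of a cell `u` of dimension `≥ k`. -/
def tgtAt (X : OmegaCat) (k : ℕ) (u : X.cell) : X.cell := X.tgt^[X.dim u - k] u

/-- The iterated identity `1^{(m)}_u` over a cell `u` of dimension `≤ m`. -/
def idePad (X : OmegaCat) (m : ℕ) (u : X.cell) : X.cell := X.ide^[m - X.dim u] u

/-- Composability of two cells at level `k`: equal dimensions `> k` and
matching iterated domain/codomain at level `k`. -/
def Composable (X : OmegaCat) (k : ℕ) (u v : X.cell) : Prop :=
  X.dim u = X.dim v ∧ k < X.dim u ∧ X.srcAt k u = X.tgtAt k v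

/-- Whiskering composition of cells of possibly different dimensions: the
lower-dimensional argument is padded with iterated identities. -/
def wcomp (X : OmegaCat) (k : ℕ) (u v : X.cell) : X.cell :=
  X.comp k (X.idePad (max (X.dim u) (X.dim v)) u)
           (X.idePad (max (X.dim u) (X.dim v)) v)

/-- Parallelism of two cells (any two 0-cells are parallel). -/
def Par (X : OmegaCat) (a b : X.cell) : Prop :=
  X.dim a = X.dim b ∧ (X.dim a = 0 ∨ (X.src a = X.src b ∧ X.tgt a = X.tgt b))

end OmegaCat

/-- The laws of a strict ω-category: globularity, behaviour of dimensions,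
domains and codomains under the operations, associativity, exchange and
identity laws for the compositions. -/
structure OmegaCat.Laws (X : OmegaCat) : Prop where
  src_dim0 : ∀ u, X.dim u = 0 → X.src u = u ∧ X.tgt u = u
  dim_src : ∀ u, 0 < X.dim u → X.dim (X.src u) = X.dim u - 1
  dim_tgt : ∀ u, 0 < X.dim u → X.dim (X.tgt u) = X.dim u - 1
  src_src : ∀ u, 1 < X.dim u → X.src (X.src u) = X.src (X.tgt u)
  tgt_src : ∀ u, 1 < X.dim u → X.tgt (X.src u) = X.tgt (X.tgt u)
  dim_ide : ∀ u, X.dim (X.ide u) = X.dim u + 1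
  src_ide : ∀ u, X.src (X.ide u) = u
  tgt_ide : ∀ u, X.tgt (X.ide u) = u
  dim_comp : ∀ k u v, X.Composable k u v → X.dim (X.comp k u v) = X.dim u
  bd_comp_top : ∀ k u v, X.Composable k u v → k + 1 = X.dim u →
    X.src (X.comp k u v) = X.src v ∧ X.tgt (X.comp k u v) = X.tgt u
  bd_comp : ∀ k u v, X.Composable k u v → k + 1 < X.dim u →
    X.src (X.comp k u v) = X.comp k (X.src u) (X.src v) ∧
    X.tgt (X.comp k u v) = X.comp k (X.tgt u) (X.tgt v)
  comp_assoc : ∀ k u v w, X.Composable k u v → X.Composable k v w →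
    X.comp k (X.comp k u v) w = X.comp k u (X.comp k v w)
  exch : ∀ l k t t₁ s s₁, l < k →
    X.Composable k t t₁ → X.Composable k s s₁ →
    X.Composable l (X.comp k t t₁) (X.comp k s s₁) →
    X.comp l (X.comp k t t₁) (X.comp k s s₁) =
      X.comp k (X.comp l t s) (X.comp l t₁ s₁)
  comp_id_left : ∀ k u, k < X.dim u →
    X.comp k (X.idePad (X.dim u) (X.tgtAt k u)) u = u
  comp_id_right : ∀ k u, k < X.dim u →
    X.comp k u (X.idePad (X.dim u) (X.srcAt k u)) = u
  ide_comp : ∀ k u v, X.Composable k u v →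
    X.ide (X.comp k u v) = X.comp k (X.ide u) (X.ide v)

/-- `F` is (the function underlying) an ω-functor from `X` to `Z`. -/
def IsOmegaFn (X Z : OmegaCat) (F : X.cell → Z.cell) : Prop :=
  (∀ u, Z.dim (F u) = X.dim u) ∧
  (∀ u, 0 < X.dim u → Z.src (F u) = F (X.src u) ∧ Z.tgt (F u) = F (X.tgt u)) ∧
  (∀ u, F (X.ide u) = Z.ide (F u)) ∧
  (∀ k u v, X.Composable k u v →
    Z.Composable k (F u) (F v) ∧ F (X.comp k u v) = Z.comp k (F u) (F v))

/-- `X` is an `n`-category: every cell of dimension `> n` is an identity. -/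
def IsNCat (X : OmegaCat) (n : ℕ) : Prop :=
  ∀ u, n < X.dim u → ∃ v, u = X.ide v

/-- `Z` extends `X` at level `m` via `e`, i.e. `e` identifies the `m`-th
truncation of `X` with that of `Z`. -/
def ExtendsAt (Z X : OmegaCat) (m : ℕ) (e : X.cell → Z.cell) : Prop :=
  (∀ a b, X.dim a ≤ m → X.dim b ≤ m → e a = e b → a = b) ∧
  (∀ u, Z.dim u ≤ m → ∃ a, X.dim a ≤ m ∧ e a = u) ∧
  (∀ a, X.dim a ≤ m → Z.dim (e a) = X.dim a) ∧
  (∀ a, 0 < X.dim a → X.dim a ≤ m →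
    Z.src (e a) = e (X.src a) ∧ Z.tgt (e a) = e (X.tgt a)) ∧
  (∀ a, X.dim a < m → Z.ide (e a) = e (X.ide a)) ∧
  (∀ k a b, X.Composable k a b → X.dim a ≤ m →
    Z.comp k (e a) (e b) = e (X.comp k a b))

/-- The `n`-th truncation of `X` is the free extension of its `(n−1)`-th
truncation generated by the set `I` of `n`-indeterminates: every assignment of
`I` into an ω-category `Z` extending the `(n−1)`-truncation of `X`, respecting
domains and codomains, extends uniquely to the `n`-truncation of `X`. -/
def FreeAtLevel (X : OmegaCat) (n : ℕ) (I : Set X.cell) : Prop :=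
  (∀ x ∈ I, X.dim x = n) ∧
  ∀ (Z : OmegaCat), Z.Laws → ∀ (e : X.cell → Z.cell), ExtendsAt Z X (n-1) e →
    ∀ (φ : X.cell → Z.cell),
      (∀ x ∈ I, Z.dim (φ x) = n ∧ Z.src (φ x) = e (X.src x) ∧
        Z.tgt (φ x) = e (X.tgt x)) →
      ∃ G : X.cell → Z.cell,
        ((∀ u, X.dim u ≤ n - 1 → G u = e u) ∧ (∀ x ∈ I, G x = φ x) ∧
         (∀ u, X.dim u ≤ n → Z.dim (G u) = X.dim u) ∧
         (∀ u, 0 < X.dim u → X.dim u ≤ n →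
           Z.src (G u) = G (X.src u) ∧ Z.tgt (G u) = G (X.tgt u)) ∧
         (∀ k u v, X.Composable k u v → X.dim u ≤ n →
           G (X.comp k u v) = Z.comp k (G u) (G v)) ∧
         (∀ u, X.dim u < n → G (X.ide u) = Z.ide (G u))) ∧
        ∀ G' : X.cell → Z.cell,
          ((∀ u, X.dim u ≤ n - 1 → G' u = e u) ∧ (∀ x ∈ I, G' x = φ x) ∧
           (∀ u, X.dim u ≤ n → Z.dim (G' u) = X.dim u) ∧
           (∀ u, 0 < X.dim u → X.dim u ≤ n →
             Z.src (G' u) = G' (X.src u) ∧ Z.tgt (G' u) = G' (X.tgt u)) ∧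
           (∀ k u v, X.Composable k u v → X.dim u ≤ n →
             G' (X.comp k u v) = Z.comp k (G' u) (G' v)) ∧
           (∀ u, X.dim u < n → G' (X.ide u) = Z.ide (G' u))) →
          ∀ u, X.dim u ≤ n → G' u = G u
/-- Raw composition terms over `n`-indeterminates `I` and cells of the ambient
`(n−1)`-category: indeterminates, identity symbols `1_a` for `(n−1)`-cells `a`,
and binary compositions `t •_k s`. -/
inductive CTerm (I : Type) (cell : Type) : Type
  | ind : I → CTerm I cell
  | idt : cell → CTerm I cell
  | comp : CTerm I cell → ℕ → CTerm I cell → CTerm I cell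

/-- The domain of a `C`-term, an `(n−1)`-cell (when defined):
`d x = dI x`, `d 1_a = a`, `d (t •_{n−1} s) = d s`,
`d (t •_k s) = d t •_k d s` for `k < n−1`. -/
def tdom (X : OmegaCat) (n : ℕ) {I : Type} (dI : I → X.cell) :
    CTerm I X.cell → Option X.cell
  | .ind x => some (dI x)
  | .idt a => some a
  | .comp t k s =>
    if k + 1 = n then tdom X n dI s
    else match tdom X n dI t, tdom X n dI s with
      | some a, some b => some (X.comp k a b)
      | _, _ => none

/-- The codomain of a `C`-term (when defined). -/
def tcod (X : OmegaCat) (n : ℕ) {I : Type} (cI : I → X.cell) :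
    CTerm I X.cell → Option X.cell
  | .ind x => some (cI x)
  | .idt a => some a
  | .comp t k s =>
    if k + 1 = n then tcod X n cI t
    else match tcod X n cI t, tcod X n cI s with
      | some a, some b => some (X.comp k a b)
      | _, _ => none

/-- Well-formed `C`-terms: identity symbols carry `(n−1)`-cells, and in
`t •_k s` one has `k < n` and `d^{(k)} t = c^{(k)} s`. -/
inductive WFC (X : OmegaCat) (n : ℕ) {I : Type} (dI cI : I → X.cell) :
    CTerm I X.cell → Prop
  | ind (x : I) : WFC X n dI cI (.ind x)
  | idt (a : X.cell) : X.dim a = n - 1 → WFC X n dI cI (.idt a)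
  | comp (t : CTerm I X.cell) (k : ℕ) (s : CTerm I X.cell) :
      WFC X n dI cI t → WFC X n dI cI s → k < n →
      (∃ a ∈ tdom X n dI t, ∃ b ∈ tcod X n cI s, X.srcAt k a = X.tgtAt k b) →
      WFC X n dI cI (.comp t k s)

/-- The equational deduction system `C` for composition terms: associativity,
exchange and identity axioms, with equivalence and congruence rules (all
compositions assumed well-formed). -/
inductive CDeriv (X : OmegaCat) (n : ℕ) {I : Type} (dI cI : I → X.cell) :
    CTerm I X.cell → CTerm I X.cell → Prop
  | refl (t) : WFC X n dI cI t → CDeriv X n dI cI t t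
  | assocAx (t k s w) :
      WFC X n dI cI (.comp (.comp t k s) k w) →
      WFC X n dI cI (.comp t k (.comp s k w)) →
      CDeriv X n dI cI (.comp (.comp t k s) k w) (.comp t k (.comp s k w))
  | exchAx (l k t t₁ s s₁) : l < k → k < n →
      WFC X n dI cI (.comp (.comp t k t₁) l (.comp s k s₁)) →
      WFC X n dI cI (.comp (.comp t l s) k (.comp t₁ l s₁)) →
      CDeriv X n dI cI (.comp (.comp t k t₁) l (.comp s k s₁))
        (.comp (.comp t l s) k (.comp t₁ l s₁))
  | idLeft (t k b) :
      WFC X n dI cI (.comp (.idt (X.idePad (n-1) b)) k t) →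
      (∃ c ∈ tcod X n cI t, X.tgtAt k c = b) →
      CDeriv X n dI cI (.comp (.idt (X.idePad (n-1) b)) k t) t
  | idRight (t k a) :
      WFC X n dI cI (.comp t k (.idt (X.idePad (n-1) a))) →
      (∃ c ∈ tdom X n dI t, X.srcAt k c = a) →
      CDeriv X n dI cI (.comp t k (.idt (X.idePad (n-1) a))) t
  | idComp (a b k) :
      WFC X n dI cI (.comp (.idt a) k (.idt b)) → X.Composable k a b →
      CDeriv X n dI cI (.comp (.idt a) k (.idt b)) (.idt (X.comp k a b))
  | symm {t s} : CDeriv X n dI cI t s → CDeriv X n dI cI s t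
  | trans {t s w} : CDeriv X n dI cI t s → CDeriv X n dI cI s w →
      CDeriv X n dI cI t w
  | congL {t s} (w k) : CDeriv X n dI cI t s →
      WFC X n dI cI (.comp t k w) → WFC X n dI cI (.comp s k w) →
      CDeriv X n dI cI (.comp t k w) (.comp s k w)
  | congR {t s} (w k) : CDeriv X n dI cI t s →
      WFC X n dI cI (.comp w k t) → WFC X n dI cI (.comp w k s) →
      CDeriv X n dI cI (.comp w k t) (.comp w k s)

/-- `x` occurs in the term `t`. -/
def occursIn {I cell : Type} (x : I) : CTerm I cell → Prop
  | .ind y => y = x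
  | .idt _ => False
  | .comp t _ s => occursIn x t ∨ occursIn x s

namespace OmegaCat

lemma srcAt_def' (X : OmegaCat) (k : ℕ) (u : X.cell) :
    X.srcAt k u = X.src^[X.dim u - k] u := rfl

lemma tgtAt_def' (X : OmegaCat) (k : ℕ) (u : X.cell) :
    X.tgtAt k u = X.tgt^[X.dim u - k] u := rfl

lemma Par.symm' {X : OmegaCat} {a b : X.cell} (h : X.Par a b) : X.Par b a := by
  obtain ⟨h1, h2⟩ := h
  refine ⟨h1.symm, ?_⟩
  rcases h2 with h2 | h2
  · left; omega
  · right; exact ⟨h2.1.symm, h2.2.symm⟩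

lemma Par.src_tgt {X : OmegaCat} {a b : X.cell} (h : X.Par a b)
    (h0 : 0 < X.dim a) : X.src a = X.src b ∧ X.tgt a = X.tgt b := by
  rcases h.2 with h2 | h2
  · omega
  · exact h2

lemma Par.srcAt_eq {X : OmegaCat} {a b : X.cell} (h : X.Par a b) {k : ℕ}
    (hk : k < X.dim a) : X.srcAt k a = X.srcAt k b := by
  have h0 : 0 < X.dim a := by omega
  have hm : X.dim a - k = (X.dim a - k - 1) + 1 := by omega
  rw [srcAt_def', srcAt_def', ← h.1, hm, Function.iterate_succ_apply,
    Function.iterate_succ_apply, (h.src_tgt h0).1]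

lemma Par.tgtAt_eq {X : OmegaCat} {a b : X.cell} (h : X.Par a b) {k : ℕ}
    (hk : k < X.dim a) : X.tgtAt k a = X.tgtAt k b := by
  have h0 : 0 < X.dim a := by omega
  have hm : X.dim a - k = (X.dim a - k - 1) + 1 := by omega
  rw [tgtAt_def', tgtAt_def', ← h.1, hm, Function.iterate_succ_apply,
    Function.iterate_succ_apply, (h.src_tgt h0).2]

/-- At composition level `k`, the iterated source of a composite is the
iterated source of the second factor, and dually for targets. -/
lemma comp_bdAt {X : OmegaCat} (hX : X.Laws) :
    ∀ (m k : ℕ) (u v : X.cell), X.dim u = k + 1 + m → X.Composable k u v →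
      X.srcAt k (X.comp k u v) = X.srcAt k v ∧
      X.tgtAt k (X.comp k u v) = X.tgtAt k u := by
  intro m
  induction m with
  | zero =>
    intro k u v hd hc
    have h1 := hc.1
    have hdu : X.dim u = k + 1 := by omega
    have hdv : X.dim v = k + 1 := by omega
    have hdc : X.dim (X.comp k u v) = k + 1 := by rw [hX.dim_comp k u v hc]; omega
    obtain ⟨hs, ht⟩ := hX.bd_comp_top k u v hc hdu.symm
    have e1 : k + 1 - k = 1 := by omega
    constructor
    · rw [srcAt_def', srcAt_def', hdc, hdv, e1]
      simp [hs]
    · rw [tgtAt_def', tgtAt_def', hdc, hdu, e1]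
      simp [ht]
  | succ m ih =>
    intro k u v hd hc
    have h1 := hc.1
    have hdu : X.dim u = k + m + 2 := by omega
    have hdv : X.dim v = k + m + 2 := by omega
    have h0u : 0 < X.dim u := by omega
    have h0v : 0 < X.dim v := by omega
    have hdsu : X.dim (X.src u) = k + m + 1 := by rw [hX.dim_src u h0u]; omega
    have hdsv : X.dim (X.src v) = k + m + 1 := by rw [hX.dim_src v h0v]; omega
    have hdtu : X.dim (X.tgt u) = k + m + 1 := by rw [hX.dim_tgt u h0u]; omega
    have hdtv : X.dim (X.tgt v) = k + m + 1 := by rw [hX.dim_tgt v h0v]; omega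
    have e1 : k + m + 1 - k = m + 1 := by omega
    have e2 : k + m + 2 - k = m + 1 + 1 := by omega
    have hcond := hc.2.2
    rw [srcAt_def', tgtAt_def', hdu, hdv, e2] at hcond
    -- hcond : X.src^[m+1+1] u = X.tgt^[m+1+1] v
    have hCs : X.Composable k (X.src u) (X.src v) := by
      refine ⟨by omega, by omega, ?_⟩
      rw [srcAt_def', tgtAt_def', hdsu, hdsv, e1]
      have l1 : X.src^[m + 1] (X.src u) = X.src^[m + 1 + 1] u :=
        (Function.iterate_succ_apply X.src (m + 1) u).symm
      have l2 : X.tgt^[m + 1] (X.src v) = X.tgt^[m + 1 + 1] v := by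
        rw [Function.iterate_succ_apply X.tgt m (X.src v),
          hX.tgt_src v (by omega),
          ← Function.iterate_succ_apply X.tgt m (X.tgt v),
          ← Function.iterate_succ_apply X.tgt (m + 1) v]
      rw [l1, l2, hcond]
    have hCt : X.Composable k (X.tgt u) (X.tgt v) := by
      refine ⟨by omega, by omega, ?_⟩
      rw [srcAt_def', tgtAt_def', hdtu, hdtv, e1]
      have l1 : X.src^[m + 1] (X.tgt u) = X.src^[m + 1 + 1] u := by
        rw [Function.iterate_succ_apply X.src m (X.tgt u),
          ← hX.src_src u (by omega),
          ← Function.iterate_succ_apply X.src m (X.src u),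
          ← Function.iterate_succ_apply X.src (m + 1) u]
      have l2 : X.tgt^[m + 1] (X.tgt v) = X.tgt^[m + 1 + 1] v :=
        (Function.iterate_succ_apply X.tgt (m + 1) v).symm
      rw [l1, l2, hcond]
    obtain ⟨hbs, hbt⟩ := hX.bd_comp k u v hc (by omega)
    have hdcomp : X.dim (X.comp k u v) = k + m + 2 := by
      rw [hX.dim_comp k u v hc]; omega
    have hdcomps : X.dim (X.comp k (X.src u) (X.src v)) = k + m + 1 := by
      rw [hX.dim_comp _ _ _ hCs]; omega
    have hdcompt : X.dim (X.comp k (X.tgt u) (X.tgt v)) = k + m + 1 := by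
      rw [hX.dim_comp _ _ _ hCt]; omega
    obtain ⟨ihs, _⟩ := ih k (X.src u) (X.src v) (by omega) hCs
    obtain ⟨_, iht⟩ := ih k (X.tgt u) (X.tgt v) (by omega) hCt
    rw [srcAt_def', srcAt_def', hdcomps, hdsv, e1] at ihs
    rw [tgtAt_def', tgtAt_def', hdcompt, hdtu, e1] at iht
    constructor
    · rw [srcAt_def', srcAt_def', hdcomp, hdv, e2,
        Function.iterate_succ_apply X.src (m + 1) (X.comp k u v), hbs, ihs,
        ← Function.iterate_succ_apply X.src (m + 1) v]
    · rw [tgtAt_def', tgtAt_def', hdcomp, hdu, e2,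
        Function.iterate_succ_apply X.tgt (m + 1) (X.comp k u v), hbt, iht,
        ← Function.iterate_succ_apply X.tgt (m + 1) u]

lemma composable_of_cond {X : OmegaCat} {n k : ℕ} (hk : k + 1 < n)
    {a b c e : X.cell}
    (hda : X.dim a = n - 1) (hdb : X.dim b = n - 1) (hdc : X.dim c = n - 1)
    (hde : X.dim e = n - 1) (hpac : X.Par a c) (hpbe : X.Par b e)
    (hcond : X.srcAt k a = X.tgtAt k e) :
    X.Composable k a b ∧ X.Composable k c e := by
  have h1 : X.tgtAt k e = X.tgtAt k b := hpbe.symm'.tgtAt_eq (by omega)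
  have h2 : X.srcAt k c = X.srcAt k a := hpac.symm'.srcAt_eq (by omega)
  exact ⟨⟨by omega, by omega, hcond.trans h1⟩,
    ⟨by omega, by omega, h2.trans hcond⟩⟩

lemma par_comp {X : OmegaCat} (hX : X.Laws) {k : ℕ} {a b c e : X.cell}
    (hCab : X.Composable k a b) (hCce : X.Composable k c e)
    (hda : X.dim a = X.dim c)
    (hpac : X.Par a c) (hpbe : X.Par b e) :
    X.Par (X.comp k a b) (X.comp k c e) := by
  have hd1 : X.dim (X.comp k a b) = X.dim a := hX.dim_comp _ _ _ hCab
  have hd2 : X.dim (X.comp k c e) = X.dim c := hX.dim_comp _ _ _ hCce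
  have hka := hCab.2.1
  have hab := hCab.1
  refine ⟨by omega, Or.inr ?_⟩
  have h0a : 0 < X.dim a := by omega
  have h0b : 0 < X.dim b := by omega
  by_cases htop : k + 1 = X.dim a
  · obtain ⟨hs1, ht1⟩ := hX.bd_comp_top k a b hCab htop
    obtain ⟨hs2, ht2⟩ := hX.bd_comp_top k c e hCce (by rw [← hda]; exact htop)
    rw [hs1, hs2, ht1, ht2, (hpbe.src_tgt h0b).1, (hpac.src_tgt h0a).2]
    exact ⟨rfl, rfl⟩
  · obtain ⟨hs1, ht1⟩ := hX.bd_comp k a b hCab (by omega)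
    obtain ⟨hs2, ht2⟩ := hX.bd_comp k c e hCce (by omega)
    rw [hs1, hs2, ht1, ht2, (hpac.src_tgt h0a).1, (hpac.src_tgt h0a).2,
      (hpbe.src_tgt h0b).1, (hpbe.src_tgt h0b).2]
    exact ⟨rfl, rfl⟩

end OmegaCat

theorem WFC.comp_inv {X : OmegaCat} {n : ℕ} {I : Type} {dI cI : I → X.cell}
    {t s : CTerm I X.cell} {k : ℕ} (h : WFC X n dI cI (.comp t k s)) :
    WFC X n dI cI t ∧ WFC X n dI cI s ∧ k < n ∧
      ∃ a ∈ tdom X n dI t, ∃ b ∈ tcod X n cI s, X.srcAt k a = X.tgtAt k b := by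
  cases h with
  | comp _ _ _ h1 h2 h3 h4 => exact ⟨h1, h2, h3, h4⟩

theorem WFC.idt_inv {X : OmegaCat} {n : ℕ} {I : Type} {dI cI : I → X.cell}
    {a : X.cell} (h : WFC X n dI cI (.idt a)) : X.dim a = n - 1 := by
  cases h with
  | idt _ h1 => exact h1

/-- Every well-formed term has a well-defined domain and codomain, which are
parallel `(n-1)`-cells. -/
theorem wf_spec {X : OmegaCat} (hX : X.Laws) {n : ℕ} (hn : 1 ≤ n) {I : Type}
    {dI cI : I → X.cell}
    (hpre : ∀ x, X.dim (dI x) = n - 1 ∧ X.dim (cI x) = n - 1 ∧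
      X.Par (dI x) (cI x)) :
    ∀ {t : CTerm I X.cell}, WFC X n dI cI t →
      ∃ a c, tdom X n dI t = some a ∧ tcod X n cI t = some c ∧
        X.dim a = n - 1 ∧ X.dim c = n - 1 ∧ X.Par a c := by
  intro t ht
  induction ht with
  | ind x => exact ⟨dI x, cI x, rfl, rfl, (hpre x).1, (hpre x).2.1, (hpre x).2.2⟩
  | idt a ha => exact ⟨a, a, rfl, rfl, ha, ha, rfl, Or.inr ⟨rfl, rfl⟩⟩
  | comp t k s hwt hws hk hex iht ihs =>
    obtain ⟨a, c, hta, htc, hda, hdc, hpac⟩ := iht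
    obtain ⟨b, e, hsb, hse, hdb, hde, hpbe⟩ := ihs
    obtain ⟨a', ha', e', he', hcond⟩ := hex
    rw [hta, Option.mem_some_iff] at ha'; subst ha'
    rw [hse, Option.mem_some_iff] at he'; subst he'
    by_cases hkn : k + 1 = n
    · have hae : a = e := by
        rw [OmegaCat.srcAt_def', OmegaCat.tgtAt_def', hda, hde] at hcond
        have h0 : n - 1 - k = 0 := by omega
        rw [h0] at hcond
        simpa using hcond
      refine ⟨b, c, by simp [tdom, hkn, hsb], by simp [tcod, hkn, htc],
        hdb, hdc, by omega, ?_⟩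
      by_cases h0 : n - 1 = 0
      · left; omega
      · right
        have h0b : 0 < X.dim b := by omega
        have h0a : 0 < X.dim a := by omega
        obtain ⟨hbe1, hbe2⟩ := hpbe.src_tgt h0b
        obtain ⟨hac1, hac2⟩ := hpac.src_tgt h0a
        constructor
        · rw [hbe1, ← hae]; exact hac1
        · rw [hbe2, ← hae]; exact hac2
    · have hk1 : k + 1 < n := by omega
      obtain ⟨hCab, hCce⟩ :=
        OmegaCat.composable_of_cond hk1 hda hdb hdc hde hpac hpbe hcond
      refine ⟨X.comp k a b, X.comp k c e,
        by simp [tdom, hkn, hta, hsb], by simp [tcod, hkn, htc, hse],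
        by rw [hX.dim_comp _ _ _ hCab]; exact hda,
        by rw [hX.dim_comp _ _ _ hCce]; exact hdc,
        OmegaCat.par_comp hX hCab hCce (by omega) hpac hpbe⟩

/-- Data of a well-formed composite term at a level below the top. -/
theorem wf_comp_data {X : OmegaCat} (hX : X.Laws) {n : ℕ} (hn : 1 ≤ n)
    {I : Type} {dI cI : I → X.cell}
    (hpre : ∀ x, X.dim (dI x) = n - 1 ∧ X.dim (cI x) = n - 1 ∧
      X.Par (dI x) (cI x))
    {t s : CTerm I X.cell} {k : ℕ} (h : WFC X n dI cI (.comp t k s))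
    (hkn : k + 1 ≠ n) :
    ∃ a c b e, tdom X n dI t = some a ∧ tcod X n cI t = some c ∧
      tdom X n dI s = some b ∧ tcod X n cI s = some e ∧
      X.dim a = n - 1 ∧ X.dim c = n - 1 ∧ X.dim b = n - 1 ∧ X.dim e = n - 1 ∧
      X.Par a c ∧ X.Par b e ∧
      X.Composable k a b ∧ X.Composable k c e ∧
      tdom X n dI (.comp t k s) = some (X.comp k a b) ∧
      tcod X n cI (.comp t k s) = some (X.comp k c e) := by
  obtain ⟨hwt, hws, hk, hex⟩ := h.comp_inv
  have hk1 : k + 1 < n := by omega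
  obtain ⟨a, c, hta, htc, hda, hdc, hpac⟩ := wf_spec hX hn hpre hwt
  obtain ⟨b, e, hsb, hse, hdb, hde, hpbe⟩ := wf_spec hX hn hpre hws
  obtain ⟨a', ha', e', he', hcond⟩ := hex
  rw [hta, Option.mem_some_iff] at ha'; subst ha'
  rw [hse, Option.mem_some_iff] at he'; subst he'
  obtain ⟨hCab, hCce⟩ :=
    OmegaCat.composable_of_cond hk1 hda hdb hdc hde hpac hpbe hcond
  exact ⟨a, c, b, e, hta, htc, hsb, hse, hda, hdc, hdb, hde, hpac, hpbe,
    hCab, hCce, by simp [tdom, hkn, hta, hsb], by simp [tcod, hkn, htc, hse]⟩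

/-- Provably equal terms have the same domain and codomain. -/
theorem deriv_bd {X : OmegaCat} (hX : X.Laws) {n : ℕ} (hn : 1 ≤ n) {I : Type}
    {dI cI : I → X.cell}
    (hpre : ∀ x, X.dim (dI x) = n - 1 ∧ X.dim (cI x) = n - 1 ∧
      X.Par (dI x) (cI x))
    {t s : CTerm I X.cell} (h : CDeriv X n dI cI t s) :
    tdom X n dI t = tdom X n dI s ∧ tcod X n cI t = tcod X n cI s := by
  induction h with
  | refl t ht => exact ⟨rfl, rfl⟩
  | symm _ ih => exact ⟨ih.1.symm, ih.2.symm⟩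
  | trans _ _ ih1 ih2 => exact ⟨ih1.1.trans ih2.1, ih1.2.trans ih2.2⟩
  | congL w k _ _ _ ih => exact ⟨by simp [tdom, ih.1], by simp [tcod, ih.2]⟩
  | congR w k _ _ _ ih => exact ⟨by simp [tdom, ih.1], by simp [tcod, ih.2]⟩
  | assocAx t k s w h1 h2 =>
    by_cases hkn : k + 1 = n
    · exact ⟨by simp [tdom, hkn], by simp [tcod, hkn]⟩
    · obtain ⟨hts, hww, hk, hex⟩ := h1.comp_inv
      obtain ⟨a, c, b, e, hta, htc, hsb, hse, hda, hdc, hdb, hde, hpac, hpbe,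
        hCab, hCce, hdcomp, hccomp⟩ := wf_comp_data hX hn hpre hts hkn
      obtain ⟨aw, cw, hwa, hwc, hdaw, hdcw, hpw⟩ := wf_spec hX hn hpre hww
      obtain ⟨p, hp, q, hq, hcond⟩ := hex
      rw [hdcomp, Option.mem_some_iff] at hp; subst hp
      rw [hwc, Option.mem_some_iff] at hq; subst hq
      have hM := OmegaCat.comp_bdAt hX (n - 2 - k) k a b (by omega) hCab
      have hCbw : X.Composable k b aw := by
        refine ⟨by omega, by omega, ?_⟩
        rw [← hM.1, hcond]
        exact hpw.symm'.tgtAt_eq (by omega)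
      have hCew : X.Composable k e cw := by
        refine ⟨by omega, by omega, ?_⟩
        rw [(hpbe.symm'.srcAt_eq (by omega) : X.srcAt k e = X.srcAt k b),
          ← hM.1, hcond]
      have hA1 := hX.comp_assoc k a b aw hCab hCbw
      have hA2 := hX.comp_assoc k c e cw hCce hCew
      constructor
      · simp [tdom, hkn, hta, hsb, hwa, hA1]
      · simp [tcod, hkn, htc, hse, hwc, hA2]
  | exchAx l k t t₁ s s₁ hlk hknn h1 h2 =>
    have hln : l + 1 ≠ n := by omega
    obtain ⟨hwtt, hwss, hl, hex⟩ := h1.comp_inv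
    by_cases hkn : k + 1 = n
    · obtain ⟨hwt, hwt1, _, _⟩ := hwtt.comp_inv
      obtain ⟨hws, hws1, _, _⟩ := hwss.comp_inv
      obtain ⟨a, c, hta, htc, _, _, _⟩ := wf_spec hX hn hpre hwt
      obtain ⟨a1, c1, ht1a, ht1c, _, _, _⟩ := wf_spec hX hn hpre hwt1
      obtain ⟨b, e, hsa, hsc, _, _, _⟩ := wf_spec hX hn hpre hws
      obtain ⟨b1, e1, hs1a, hs1c, _, _, _⟩ := wf_spec hX hn hpre hws1
      constructor
      · simp [tdom, hkn, hln, ht1a, hs1a]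
      · simp [tcod, hkn, hln, htc, hsc]
    · obtain ⟨dt, ct, dt1, ct1, htd, htc, ht1d, ht1c, hd1, hd2, hd3, hd4,
        hpt, hpt1, hC1, hC2, hDT, hCT⟩ := wf_comp_data hX hn hpre hwtt hkn
      obtain ⟨ds, cs, ds1, cs1, hsd, hsc, hs1d, hs1c, hd5, hd6, hd7, hd8,
        hps, hps1, hC3, hC4, hDS, hCS⟩ := wf_comp_data hX hn hpre hwss hkn
      obtain ⟨p, hp, q, hq, hcond⟩ := hex
      rw [hDT, Option.mem_some_iff] at hp; subst hp
      rw [hCS, Option.mem_some_iff] at hq; subst hq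
      have hPT : X.Par (X.comp k dt dt1) (X.comp k ct ct1) :=
        OmegaCat.par_comp hX hC1 hC2 (by omega) hpt hpt1
      have hPS : X.Par (X.comp k ds ds1) (X.comp k cs cs1) :=
        OmegaCat.par_comp hX hC3 hC4 (by omega) hps hps1
      have hdA : X.dim (X.comp k dt dt1) = n - 1 := by
        rw [hX.dim_comp _ _ _ hC1]; omega
      have hdB : X.dim (X.comp k ds ds1) = n - 1 := by
        rw [hX.dim_comp _ _ _ hC3]; omega
      have hdC : X.dim (X.comp k ct ct1) = n - 1 := by
        rw [hX.dim_comp _ _ _ hC2]; omega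
      have hdD : X.dim (X.comp k cs cs1) = n - 1 := by
        rw [hX.dim_comp _ _ _ hC4]; omega
      have hCl : X.Composable l (X.comp k dt dt1) (X.comp k ds ds1) := by
        refine ⟨by omega, by omega, ?_⟩
        rw [hcond]
        exact hPS.symm'.tgtAt_eq (by omega)
      have hCl' : X.Composable l (X.comp k ct ct1) (X.comp k cs cs1) := by
        refine ⟨by omega, by omega, ?_⟩
        rw [← hPT.srcAt_eq (by omega), hcond]
      have hE1 := hX.exch l k dt dt1 ds ds1 hlk hC1 hC3 hCl
      have hE2 := hX.exch l k ct ct1 cs cs1 hlk hC2 hC4 hCl'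
      constructor
      · simp [tdom, hkn, hln, htd, ht1d, hsd, hs1d, hE1]
      · simp [tcod, hkn, hln, htc, ht1c, hsc, hs1c, hE2]
  | idLeft t k b hwf hex =>
    obtain ⟨hwid, hwt, hk, _⟩ := hwf.comp_inv
    obtain ⟨a, c, hta, htc, hda, hdc, hpac⟩ := wf_spec hX hn hpre hwt
    obtain ⟨q, hq, hqb⟩ := hex
    rw [htc, Option.mem_some_iff] at hq; subst hq
    by_cases hkn : k + 1 = n
    · have hcb : c = b := by
        rw [← hqb, OmegaCat.tgtAt_def', hdc]
        have h0 : n - 1 - k = 0 := by omega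
        rw [h0]; simp
      have hdbb : X.dim b = n - 1 := hcb ▸ hdc
      have hpad : X.idePad (n - 1) b = b := by
        simp [OmegaCat.idePad, hdbb]
      constructor
      · simp [tdom, hkn]
      · simp [tcod, hkn, hpad, htc, hcb]
    · have hqa : X.tgtAt k a = b := by
        rw [hpac.tgtAt_eq (by omega)]; exact hqb
      have hIa : X.comp k (X.idePad (n - 1) b) a = a := by
        have h := hX.comp_id_left k a (by omega)
        rwa [hda, hqa] at h
      have hIc : X.comp k (X.idePad (n - 1) b) c = c := by
        have h := hX.comp_id_left k c (by omega)
        rwa [hdc, hqb] at h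
      constructor
      · simp [tdom, hkn, hta, hIa]
      · simp [tcod, hkn, htc, hIc]
  | idRight t k a hwf hex =>
    obtain ⟨hwt, hwid, hk, _⟩ := hwf.comp_inv
    obtain ⟨b, c, hta, htc, hdb, hdc, hpbc⟩ := wf_spec hX hn hpre hwt
    obtain ⟨q, hq, hqa⟩ := hex
    rw [hta, Option.mem_some_iff] at hq; subst hq
    by_cases hkn : k + 1 = n
    · have hba : b = a := by
        rw [← hqa, OmegaCat.srcAt_def', hdb]
        have h0 : n - 1 - k = 0 := by omega
        rw [h0]; simp
      have hdaa : X.dim a = n - 1 := hba ▸ hdb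
      have hpad : X.idePad (n - 1) a = a := by
        simp [OmegaCat.idePad, hdaa]
      constructor
      · simp [tdom, hkn, hpad, hta, hba]
      · simp [tcod, hkn]
    · have hqc : X.srcAt k c = a := by
        rw [← hpbc.srcAt_eq (by omega)]; exact hqa
      have hIb : X.comp k b (X.idePad (n - 1) a) = b := by
        have h := hX.comp_id_right k b (by omega)
        rwa [hdb, hqa] at h
      have hIc : X.comp k c (X.idePad (n - 1) a) = c := by
        have h := hX.comp_id_right k c (by omega)
        rwa [hdc, hqc] at h
      constructor
      · simp [tdom, hkn, hta, hIb]
      · simp [tcod, hkn, htc, hIc]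
  | idComp a b k hwf hC =>
    obtain ⟨hwa, hwb, hk, _⟩ := hwf.comp_inv
    have hda : X.dim a = n - 1 := hwa.idt_inv
    have hkd := hC.2.1
    have hkn : k + 1 ≠ n := by omega
    exact ⟨by simp [tdom, hkn], by simp [tcod, hkn]⟩

/-- Provably equal terms contain the same indeterminates. -/
theorem deriv_occurs {X : OmegaCat} {n : ℕ} {I : Type} {dI cI : I → X.cell}
    {t s : CTerm I X.cell} (h : CDeriv X n dI cI t s) (x : I) :
    occursIn x t ↔ occursIn x s := by
  induction h with
  | refl => exact Iff.rfl
  | symm _ ih => exact ih.symm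
  | trans _ _ ih1 ih2 => exact ih1.trans ih2
  | congL w k _ _ _ ih => simp [occursIn, ih]
  | congR w k _ _ _ ih => simp [occursIn, ih]
  | assocAx => simp [occursIn, or_assoc]
  | exchAx =>
    simp only [occursIn]
    tauto
  | idLeft => simp [occursIn]
  | idRight => simp [occursIn]
  | idComp => simp [occursIn]

/-- If `⊢ t = s` is provable in the deduction system `C` over an
`(n−1)`-category with `n`-indeterminates `I`, then (a) `dt = ds` and
`ct = cs`, and (b) the same indeterminates occur in `t` and in `s`.
Consequently distinct indeterminates are not provably equal. -/

theorem stmt10 (X : OmegaCat) (hX : X.Laws) (n : ℕ) (hn : 1 ≤ n)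
    (hXcat : IsNCat X (n-1))
    (I : Type) (dI cI : I → X.cell)
    (hpre : ∀ x, X.dim (dI x) = n - 1 ∧ X.dim (cI x) = n - 1 ∧
      X.Par (dI x) (cI x)) :
    (∀ t s, CDeriv X n dI cI t s →
      tdom X n dI t = tdom X n dI s ∧ tcod X n cI t = tcod X n cI s) ∧
    (∀ t s x, CDeriv X n dI cI t s → (occursIn x t ↔ occursIn x s)) ∧
    (∀ x y : I, x ≠ y → ¬ CDeriv X n dI cI (.ind x) (.ind y)) := by
  refine ⟨fun t s h => deriv_bd hX hn hpre h,
    fun t s x h => deriv_occurs h x, ?_⟩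
  intro x y hxy h
  have hx : occursIn x (CTerm.ind (cell := X.cell) x) := rfl
  have hy := (deriv_occurs h x).mp hx
  exact hxy ((show y = x from hy).symm)
end

section
/- Let X be an ω-category whose n-truncation is a free extension A[I]. The generalized whiskering (replacement) operations on n-cells satisfy: (commutativity) for distinct occurrence indices r ≠ q in ⟦u⟧, (u ▫_r v) ▫_q w = (u ▫_q w) ▫_r v whenever both sides are defined with v, w n-cells; (associativity) if u ▫_r v is defined with v an n-cell, q ∈ ⟦v⟧, and v ▫_q w is defined with w of dimension ≥ n, then (u ▫_r v) ▫_q w = u ▫_r (v ▫_q w); (identity) if ⟨u⟩(r) = x then u ▫_r x = u. -/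
/-- Occurrence data for the `n`-cells of `X` (whose `n`-truncation is freely
generated by the `n`-indeterminates `I`): each `n`-cell `u` has a finite
indexed set of occurrences of indeterminates, with
`⟦u •_k v⟧ = ⟦u⟧ ⊔ ⟦v⟧`, one occurrence in each indeterminate and none in
identity cells. -/
structure CellOcc (X : OmegaCat) (n : ℕ) (I : Set X.cell) where
  oI : X.cell → Finset ℕ
  oF : X.cell → ℕ → X.cell
  occ_mem : ∀ u r, r ∈ oI u → oF u r ∈ I
  occ_ind : ∀ x ∈ I, ∃ r, oI x = {r} ∧ oF x r = x
  occ_ide : ∀ u, X.dim u = n - 1 → oI (X.ide u) = ∅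
  occ_comp : ∀ k u v, k < n → X.dim u = n → X.Composable k u v →
    Disjoint (oI u) (oI v) ∧ oI (X.comp k u v) = oI u ∪ oI v ∧
    (∀ i ∈ oI u, oF (X.comp k u v) i = oF u i) ∧
    (∀ i ∈ oI v, oF (X.comp k u v) i = oF v i)

/-- Definedness of the generalized whiskering `u ▫_r v`: `u` is an `n`-cell,
`r` indexes an occurrence of the indeterminate `x = ⟨u⟩(r)` in `u`, and `v` is
a cell of dimension `≥ n` with `d^{(n−1)} v = d x` and `c^{(n−1)} v = c x`. -/
def WDef (X : OmegaCat) (n : ℕ) {I : Set X.cell} (D : CellOcc X n I)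
    (u : X.cell) (r : ℕ) (v : X.cell) : Prop :=
  X.dim u = n ∧ r ∈ D.oI u ∧ n ≤ X.dim v ∧
  X.srcAt (n-1) v = X.src (D.oF u r) ∧ X.tgtAt (n-1) v = X.tgt (D.oF u r)

/-- The characterizing conditions for the system of generalized whiskering
(replacement) operations `▫` on the `n`-cells of `X`. -/
def IsWhisk (X : OmegaCat) (n : ℕ) {I : Set X.cell} (D : CellOcc X n I)
    (rep : X.cell → ℕ → X.cell → X.cell) : Prop :=
  (∀ u r v, WDef X n D u r v →
      X.dim (rep u r v) = X.dim v ∧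
      X.srcAt (n-1) (rep u r v) = X.src u ∧
      X.tgtAt (n-1) (rep u r v) = X.tgt u) ∧
  (∀ x r v, x ∈ I → D.oI x = {r} → WDef X n D x r v → rep x r v = v) ∧
  (∀ k u u' r v, k < n → X.dim u = n → X.Composable k u u' →
     WDef X n D (X.comp k u u') r v →
     (r ∈ D.oI u → rep (X.comp k u u') r v = X.wcomp k (rep u r v) u') ∧
     (r ∈ D.oI u' → rep (X.comp k u u') r v = X.wcomp k u (rep u' r v)))

/-- Placed composition: `u ∘_r v = u •_n (du ▫_r v)`. -/
def pcomp (X : OmegaCat) (n : ℕ) (rep : X.cell → ℕ → X.cell → X.cell)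
    (u : X.cell) (r : ℕ) (v : X.cell) : X.cell :=
  X.comp n u (rep (X.src u) r v)

/-- Definedness of the placed composition of `(n+1)`-cells `u ∘_r v`:
`r` indexes an occurrence of an indeterminate `x` in `du` and `cv = x`. -/
def PDef (X : OmegaCat) (n : ℕ) {I : Set X.cell} (D : CellOcc X n I)
    (u : X.cell) (r : ℕ) (v : X.cell) : Prop :=
  X.dim u = n + 1 ∧ X.dim v = n + 1 ∧ r ∈ D.oI (X.src u) ∧
    X.tgt v = D.oF (X.src u) r

/-!
Since the `n`-truncation is free, `n`-cells admit structural induction: freeness maps `X` into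
the sub-ω-category of cells whose `n`-dimensional faces satisfy a predicate `P`, and uniqueness
of the extension forces the composite with the inclusion to be the identity. So `P` holds for
all `n`-cells once it holds for the indeterminates and for identities on `(n-1)`-cells and is
preserved by composition. All three laws follow by this induction on `u`: on an indeterminate
`x`, `x ▫_r v = v`; identities have no occurrences; on a composite `u₁ •_k u₂` the defining
clauses of `▫` push each replacement into the factor containing its occurrence, where the
induction hypothesis applies, and two replacements in different factors visibly commute.
-/

namespace OmegaCat

variable {X : OmegaCat}

theorem srcAt_of_dim_eq {k : ℕ} {u : X.cell} (h : X.dim u = k) : X.srcAt k u = u := by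
  rw [srcAt, h, Nat.sub_self, Function.iterate_zero_apply]

theorem tgtAt_of_dim_eq {k : ℕ} {u : X.cell} (h : X.dim u = k) : X.tgtAt k u = u := by
  rw [tgtAt, h, Nat.sub_self, Function.iterate_zero_apply]

theorem srcAt_of_dim_eq_succ {k : ℕ} {u : X.cell} (h : X.dim u = k + 1) :
    X.srcAt k u = X.src u := by
  rw [srcAt, h, Nat.add_sub_cancel_left, Function.iterate_one]

theorem tgtAt_of_dim_eq_succ {k : ℕ} {u : X.cell} (h : X.dim u = k + 1) :
    X.tgtAt k u = X.tgt u := by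
  rw [tgtAt, h, Nat.add_sub_cancel_left, Function.iterate_one]

theorem idePad_dim_self (u : X.cell) : X.idePad (X.dim u) u = u := by
  rw [idePad, Nat.sub_self, Function.iterate_zero_apply]

theorem wcomp_of_dim_eq {k : ℕ} {u v : X.cell} (h : X.dim u = X.dim v) :
    X.wcomp k u v = X.comp k u v := by
  rw [wcomp, ← h, max_self, idePad_dim_self, h, idePad_dim_self]

end OmegaCat

namespace OmegaCat.Laws

variable {X : OmegaCat}

theorem dim_iterate_src (hX : X.Laws) {j : ℕ} {u : X.cell} (h : j ≤ X.dim u) :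
    X.dim (X.src^[j] u) = X.dim u - j := by
  induction j with
  | zero => rfl
  | succ j ih =>
    rw [Function.iterate_succ_apply', hX.dim_src _ (by rw [ih (by omega)]; omega),
      ih (by omega), Nat.sub_sub]

theorem dim_iterate_tgt (hX : X.Laws) {j : ℕ} {u : X.cell} (h : j ≤ X.dim u) :
    X.dim (X.tgt^[j] u) = X.dim u - j := by
  induction j with
  | zero => rfl
  | succ j ih =>
    rw [Function.iterate_succ_apply', hX.dim_tgt _ (by rw [ih (by omega)]; omega),
      ih (by omega), Nat.sub_sub]

theorem dim_iterate_ide (hX : X.Laws) (j : ℕ) (u : X.cell) :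
    X.dim (X.ide^[j] u) = X.dim u + j := by
  induction j with
  | zero => rfl
  | succ j ih => rw [Function.iterate_succ_apply', hX.dim_ide, ih, Nat.add_assoc]

theorem dim_srcAt (hX : X.Laws) {k : ℕ} {u : X.cell} (h : k ≤ X.dim u) :
    X.dim (X.srcAt k u) = k := by
  rw [srcAt, hX.dim_iterate_src (Nat.sub_le _ _)]; omega

theorem dim_tgtAt (hX : X.Laws) {k : ℕ} {u : X.cell} (h : k ≤ X.dim u) :
    X.dim (X.tgtAt k u) = k := by
  rw [tgtAt, hX.dim_iterate_tgt (Nat.sub_le _ _)]; omega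

theorem dim_idePad (hX : X.Laws) {m : ℕ} {u : X.cell} (h : X.dim u ≤ m) :
    X.dim (X.idePad m u) = m := by
  rw [idePad, hX.dim_iterate_ide]; omega

theorem srcAt_src (hX : X.Laws) {k : ℕ} {u : X.cell} (h : k < X.dim u) :
    X.srcAt k (X.src u) = X.srcAt k u := by
  rw [srcAt, srcAt, hX.dim_src u (by omega), show X.dim u - k = X.dim u - 1 - k + 1 by omega,
    Function.iterate_succ_apply]

theorem tgtAt_tgt (hX : X.Laws) {k : ℕ} {u : X.cell} (h : k < X.dim u) :
    X.tgtAt k (X.tgt u) = X.tgtAt k u := by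
  rw [tgtAt, tgtAt, hX.dim_tgt u (by omega), show X.dim u - k = X.dim u - 1 - k + 1 by omega,
    Function.iterate_succ_apply]

theorem srcAt_tgt (hX : X.Laws) {k : ℕ} {u : X.cell} (h : k + 1 < X.dim u) :
    X.srcAt k (X.tgt u) = X.srcAt k u := by
  rw [srcAt, srcAt, hX.dim_tgt u (by omega),
    show X.dim u - 1 - k = X.dim u - 2 - k + 1 by omega,
    show X.dim u - k = X.dim u - 2 - k + 1 + 1 by omega, Function.iterate_succ_apply,
    Function.iterate_succ_apply, Function.iterate_succ_apply, hX.src_src u (by omega)]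

theorem tgtAt_src (hX : X.Laws) {k : ℕ} {u : X.cell} (h : k + 1 < X.dim u) :
    X.tgtAt k (X.src u) = X.tgtAt k u := by
  rw [tgtAt, tgtAt, hX.dim_src u (by omega),
    show X.dim u - 1 - k = X.dim u - 2 - k + 1 by omega,
    show X.dim u - k = X.dim u - 2 - k + 1 + 1 by omega, Function.iterate_succ_apply,
    Function.iterate_succ_apply, Function.iterate_succ_apply, hX.tgt_src u (by omega)]

theorem srcAt_srcAt (hX : X.Laws) {l k : ℕ} {u : X.cell} (hlk : l ≤ k) (hk : k ≤ X.dim u) :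
    X.srcAt l (X.srcAt k u) = X.srcAt l u := by
  conv_lhs => rw [srcAt, hX.dim_srcAt hk]
  rw [srcAt, srcAt, ← Function.iterate_add_apply]
  congr 1; omega

theorem tgtAt_tgtAt (hX : X.Laws) {l k : ℕ} {u : X.cell} (hlk : l ≤ k) (hk : k ≤ X.dim u) :
    X.tgtAt l (X.tgtAt k u) = X.tgtAt l u := by
  conv_lhs => rw [tgtAt, hX.dim_tgtAt hk]
  rw [tgtAt, tgtAt, ← Function.iterate_add_apply]
  congr 1; omega

theorem srcAt_tgtAt (hX : X.Laws) {l k : ℕ} {u : X.cell} (hlk : l < k) (hk : k ≤ X.dim u) :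
    X.srcAt l (X.tgtAt k u) = X.srcAt l u := by
  obtain ⟨j, hj⟩ : ∃ j, X.dim u = k + j := ⟨X.dim u - k, by omega⟩
  induction j generalizing u with
  | zero => rw [tgtAt_of_dim_eq (k := k) hj]
  | succ j ih =>
    rw [← hX.tgtAt_tgt (by omega), ih (by rw [hX.dim_tgt u (by omega)]; omega)
      (by rw [hX.dim_tgt u (by omega)]; omega), hX.srcAt_tgt (by omega)]

theorem tgtAt_srcAt (hX : X.Laws) {l k : ℕ} {u : X.cell} (hlk : l < k) (hk : k ≤ X.dim u) :
    X.tgtAt l (X.srcAt k u) = X.tgtAt l u := by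
  obtain ⟨j, hj⟩ : ∃ j, X.dim u = k + j := ⟨X.dim u - k, by omega⟩
  induction j generalizing u with
  | zero => rw [srcAt_of_dim_eq (k := k) hj]
  | succ j ih =>
    rw [← hX.srcAt_src (by omega), ih (by rw [hX.dim_src u (by omega)]; omega)
      (by rw [hX.dim_src u (by omega)]; omega), hX.tgtAt_src (by omega)]

theorem srcAt_ide (hX : X.Laws) {k : ℕ} {u : X.cell} (h : k ≤ X.dim u) :
    X.srcAt k (X.ide u) = X.srcAt k u := by
  rw [srcAt, srcAt, hX.dim_ide u, show X.dim u + 1 - k = X.dim u - k + 1 by omega,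
    Function.iterate_succ_apply, hX.src_ide]

theorem tgtAt_ide (hX : X.Laws) {k : ℕ} {u : X.cell} (h : k ≤ X.dim u) :
    X.tgtAt k (X.ide u) = X.tgtAt k u := by
  rw [tgtAt, tgtAt, hX.dim_ide u, show X.dim u + 1 - k = X.dim u - k + 1 by omega,
    Function.iterate_succ_apply, hX.tgt_ide]

theorem srcAt_idePad (hX : X.Laws) {k m : ℕ} {w : X.cell} (hw : X.dim w = k) (h : k ≤ m) :
    X.srcAt k (X.idePad m w) = w := by
  rw [srcAt, hX.dim_idePad (by omega), idePad, hw]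
  induction m - k generalizing w with
  | zero => rfl
  | succ j ih =>
    rw [Function.iterate_succ_apply' (f := X.ide), Function.iterate_succ_apply, hX.src_ide,
      ih hw]

theorem tgtAt_idePad (hX : X.Laws) {k m : ℕ} {w : X.cell} (hw : X.dim w = k) (h : k ≤ m) :
    X.tgtAt k (X.idePad m w) = w := by
  rw [tgtAt, hX.dim_idePad (by omega), idePad, hw]
  induction m - k generalizing w with
  | zero => rfl
  | succ j ih =>
    rw [Function.iterate_succ_apply' (f := X.ide), Function.iterate_succ_apply, hX.tgt_ide,
      ih hw]

end OmegaCat.Laws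

namespace OmegaCat.Laws

variable {X : OmegaCat}

theorem composable_src (hX : X.Laws) {k : ℕ} {u v : X.cell} (h : X.Composable k u v)
    (hd : k + 1 < X.dim u) : X.Composable k (X.src u) (X.src v) := by
  obtain ⟨h1, -, h3⟩ := h
  refine ⟨by rw [hX.dim_src u (by omega), hX.dim_src v (by omega), h1], ?_, ?_⟩
  · rw [hX.dim_src u (by omega)]; omega
  · rw [hX.srcAt_src (by omega), hX.tgtAt_src (by omega), h3]

theorem composable_tgt (hX : X.Laws) {k : ℕ} {u v : X.cell} (h : X.Composable k u v)
    (hd : k + 1 < X.dim u) : X.Composable k (X.tgt u) (X.tgt v) := by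
  obtain ⟨h1, -, h3⟩ := h
  refine ⟨by rw [hX.dim_tgt u (by omega), hX.dim_tgt v (by omega), h1], ?_, ?_⟩
  · rw [hX.dim_tgt u (by omega)]; omega
  · rw [hX.srcAt_tgt (by omega), hX.tgtAt_tgt (by omega), h3]

theorem composable_srcAt (hX : X.Laws) {k m : ℕ} {u v : X.cell} (h : X.Composable k u v)
    (hkm : k < m) (hm : m ≤ X.dim u) : X.Composable k (X.srcAt m u) (X.srcAt m v) := by
  refine ⟨by rw [hX.dim_srcAt hm, hX.dim_srcAt (h.1 ▸ hm)], by rwa [hX.dim_srcAt hm], ?_⟩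
  rw [hX.srcAt_srcAt hkm.le hm, hX.tgtAt_srcAt hkm (h.1 ▸ hm)]
  exact h.2.2

theorem composable_tgtAt (hX : X.Laws) {k m : ℕ} {u v : X.cell} (h : X.Composable k u v)
    (hkm : k < m) (hm : m ≤ X.dim u) : X.Composable k (X.tgtAt m u) (X.tgtAt m v) := by
  refine ⟨by rw [hX.dim_tgtAt hm, hX.dim_tgtAt (h.1 ▸ hm)], by rwa [hX.dim_tgtAt hm], ?_⟩
  rw [hX.srcAt_tgtAt hkm hm, hX.tgtAt_tgtAt hkm.le (h.1 ▸ hm)]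
  exact h.2.2

theorem composable_ide (hX : X.Laws) {k : ℕ} {u v : X.cell} (h : X.Composable k u v) :
    X.Composable k (X.ide u) (X.ide v) := by
  obtain ⟨h1, h2, h3⟩ := h
  refine ⟨by rw [hX.dim_ide, hX.dim_ide, h1], by rw [hX.dim_ide]; omega, ?_⟩
  rw [hX.srcAt_ide h2.le, hX.tgtAt_ide (by omega), h3]

theorem composable_idePad_tgtAt (hX : X.Laws) {k : ℕ} {u : X.cell} (h : k < X.dim u) :
    X.Composable k (X.idePad (X.dim u) (X.tgtAt k u)) u := by
  have hd := hX.dim_idePad (m := X.dim u) (u := X.tgtAt k u) (by rw [hX.dim_tgtAt h.le]; omega)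
  exact ⟨hd, by rwa [hd], by rw [hX.srcAt_idePad (hX.dim_tgtAt h.le) h.le]⟩

theorem composable_idePad_srcAt (hX : X.Laws) {k : ℕ} {u : X.cell} (h : k < X.dim u) :
    X.Composable k u (X.idePad (X.dim u) (X.srcAt k u)) := by
  have hd := hX.dim_idePad (m := X.dim u) (u := X.srcAt k u) (by rw [hX.dim_srcAt h.le]; omega)
  exact ⟨hd.symm, h, by rw [hX.tgtAt_idePad (hX.dim_srcAt h.le) h.le]⟩

theorem srcAt_comp (hX : X.Laws) {k : ℕ} {u v : X.cell} (h : X.Composable k u v) :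
    X.srcAt k (X.comp k u v) = X.srcAt k v := by
  obtain ⟨j, hj⟩ : ∃ j, X.dim u = k + 1 + j := ⟨X.dim u - (k + 1), by have := h.2.1; omega⟩
  induction j generalizing u v with
  | zero =>
    have hdv : X.dim v = k + 1 := by rw [← h.1, hj]
    rw [srcAt_of_dim_eq_succ (by rw [hX.dim_comp k u v h, hj]), srcAt_of_dim_eq_succ hdv,
      (hX.bd_comp_top k u v h hj.symm).1]
  | succ j ih =>
    have hdv : X.dim v = X.dim u := h.1.symm
    rw [← hX.srcAt_src (by rw [hX.dim_comp k u v h]; omega), (hX.bd_comp k u v h (by omega)).1,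
      ih (hX.composable_src h (by omega)) (by rw [hX.dim_src u (by omega)]; omega),
      hX.srcAt_src (by omega)]

theorem tgtAt_comp (hX : X.Laws) {k : ℕ} {u v : X.cell} (h : X.Composable k u v) :
    X.tgtAt k (X.comp k u v) = X.tgtAt k u := by
  obtain ⟨j, hj⟩ : ∃ j, X.dim u = k + 1 + j := ⟨X.dim u - (k + 1), by have := h.2.1; omega⟩
  induction j generalizing u v with
  | zero =>
    rw [tgtAt_of_dim_eq_succ (by rw [hX.dim_comp k u v h, hj]), tgtAt_of_dim_eq_succ hj,
      (hX.bd_comp_top k u v h hj.symm).2]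
  | succ j ih =>
    rw [← hX.tgtAt_tgt (by rw [hX.dim_comp k u v h]; omega), (hX.bd_comp k u v h (by omega)).2,
      ih (hX.composable_tgt h (by omega)) (by rw [hX.dim_tgt u (by omega)]; omega),
      hX.tgtAt_tgt (by omega)]

theorem srcAt_comp_of_le (hX : X.Laws) {k m : ℕ} {u v : X.cell} (h : X.Composable k u v)
    (hm : m ≤ k) : X.srcAt m (X.comp k u v) = X.srcAt m v := by
  have hk := h.2.1
  rw [← hX.srcAt_srcAt hm (by rw [hX.dim_comp k u v h]; omega), hX.srcAt_comp h,
    hX.srcAt_srcAt hm (by rw [← h.1]; omega)]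

theorem tgtAt_comp_of_le (hX : X.Laws) {k m : ℕ} {u v : X.cell} (h : X.Composable k u v)
    (hm : m ≤ k) : X.tgtAt m (X.comp k u v) = X.tgtAt m u := by
  have hk := h.2.1
  rw [← hX.tgtAt_tgtAt hm (by rw [hX.dim_comp k u v h]; omega), hX.tgtAt_comp h,
    hX.tgtAt_tgtAt hm (by omega)]

theorem srcAt_comp_of_lt (hX : X.Laws) {k m : ℕ} {u v : X.cell} (h : X.Composable k u v)
    (hkm : k < m) (hm : m ≤ X.dim u) :
    X.srcAt m (X.comp k u v) = X.comp k (X.srcAt m u) (X.srcAt m v) := by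
  obtain ⟨j, hj⟩ : ∃ j, X.dim u = m + j := ⟨X.dim u - m, by omega⟩
  induction j generalizing u v with
  | zero =>
    have hdv : X.dim v = m := by rw [← h.1, hj]; rfl
    have hdc : X.dim (X.comp k u v) = m := by rw [hX.dim_comp k u v h, hj]; rfl
    rw [srcAt_of_dim_eq (k := m) hj, srcAt_of_dim_eq hdv, srcAt_of_dim_eq hdc]
  | succ j ih =>
    have hdv : X.dim v = X.dim u := h.1.symm
    rw [← hX.srcAt_src (by rw [hX.dim_comp k u v h]; omega), (hX.bd_comp k u v h (by omega)).1,
      ih (hX.composable_src h (by omega)) (by rw [hX.dim_src u (by omega)]; omega)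
        (by rw [hX.dim_src u (by omega)]; omega),
      hX.srcAt_src (by omega), hX.srcAt_src (by omega)]

theorem tgtAt_comp_of_lt (hX : X.Laws) {k m : ℕ} {u v : X.cell} (h : X.Composable k u v)
    (hkm : k < m) (hm : m ≤ X.dim u) :
    X.tgtAt m (X.comp k u v) = X.comp k (X.tgtAt m u) (X.tgtAt m v) := by
  obtain ⟨j, hj⟩ : ∃ j, X.dim u = m + j := ⟨X.dim u - m, by omega⟩
  induction j generalizing u v with
  | zero =>
    have hdv : X.dim v = m := by rw [← h.1, hj]; rfl
    have hdc : X.dim (X.comp k u v) = m := by rw [hX.dim_comp k u v h, hj]; rfl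
    rw [tgtAt_of_dim_eq (k := m) hj, tgtAt_of_dim_eq hdv, tgtAt_of_dim_eq hdc]
  | succ j ih =>
    have hdv : X.dim v = X.dim u := h.1.symm
    rw [← hX.tgtAt_tgt (by rw [hX.dim_comp k u v h]; omega), (hX.bd_comp k u v h (by omega)).2,
      ih (hX.composable_tgt h (by omega)) (by rw [hX.dim_tgt u (by omega)]; omega)
        (by rw [hX.dim_tgt u (by omega)]; omega),
      hX.tgtAt_tgt (by omega), hX.tgtAt_tgt (by omega)]

theorem composable_comp_left (hX : X.Laws) {k : ℕ} {u v w : X.cell}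
    (huv : X.Composable k u v) (hvw : X.Composable k v w) :
    X.Composable k (X.comp k u v) w := by
  rw [OmegaCat.Composable, hX.dim_comp k u v huv, hX.srcAt_comp huv, huv.1]
  exact hvw

theorem composable_comp_right (hX : X.Laws) {k : ℕ} {u v w : X.cell}
    (huv : X.Composable k u v) (hvw : X.Composable k v w) :
    X.Composable k u (X.comp k v w) := by
  rw [OmegaCat.Composable, hX.dim_comp k v w hvw, hX.tgtAt_comp hvw]
  exact ⟨huv.1, huv.2⟩

theorem composable_of_exch (hX : X.Laws) {l k : ℕ} {t t₁ s s₁ : X.cell} (hlk : l < k)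
    (ht : X.Composable k t t₁) (hs : X.Composable k s s₁)
    (h : X.Composable l (X.comp k t t₁) (X.comp k s s₁)) :
    X.Composable l t s ∧ X.Composable l t₁ s₁ ∧
      X.Composable k (X.comp l t s) (X.comp l t₁ s₁) := by
  obtain ⟨hdim, hl, hmid⟩ := h
  rw [hX.dim_comp k _ _ ht, hX.dim_comp k _ _ hs] at hdim
  rw [hX.dim_comp k _ _ ht] at hl
  rw [hX.srcAt_comp_of_le ht hlk.le, hX.tgtAt_comp_of_le hs hlk.le] at hmid
  have hkt := ht.2.1
  have hks := hs.2.1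
  have hst : X.srcAt l t = X.srcAt l t₁ := by
    rw [← hX.srcAt_srcAt hlk.le hkt.le, ht.2.2, hX.srcAt_tgtAt hlk (by rw [← ht.1]; omega)]
  have hts : X.tgtAt l s₁ = X.tgtAt l s := by
    rw [← hX.tgtAt_tgtAt hlk.le (by rw [← hs.1]; omega), ← hs.2.2, hX.tgtAt_srcAt hlk hks.le]
  have hls : X.Composable l t s := ⟨hdim, hl, hst.trans hmid⟩
  have hls₁ : X.Composable l t₁ s₁ := ⟨by rw [← ht.1, hdim, hs.1], ht.1 ▸ hl, hmid.trans hts.symm⟩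
  refine ⟨hls, hls₁, ?_, ?_, ?_⟩
  · rw [hX.dim_comp l _ _ hls, hX.dim_comp l _ _ hls₁, ht.1]
  · rwa [hX.dim_comp l _ _ hls]
  · rw [hX.srcAt_comp_of_lt hls hlk hkt.le, hX.tgtAt_comp_of_lt hls₁ hlk (by rw [← ht.1]; omega),
      ht.2.2, hs.2.2]

end OmegaCat.Laws

namespace OmegaCat

variable {X : OmegaCat} {Q : X.cell → Prop}

structure IsSubcategory (X : OmegaCat) (Q : X.cell → Prop) : Prop where
  src_mem : ∀ u, Q u → Q (X.src u)
  tgt_mem : ∀ u, Q u → Q (X.tgt u)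
  ide_mem : ∀ u, Q u → Q (X.ide u)
  comp_mem : ∀ k u v, X.Composable k u v → Q u → Q v → Q (X.comp k u v)

namespace IsSubcategory

open Classical in
/-- The composite of a non-composable pair, which no law constrains, is set to the left factor. -/
noncomputable abbrev toOmegaCat (hQ : X.IsSubcategory Q) : OmegaCat where
  cell := {u : X.cell // Q u}
  dim a := X.dim a.1
  src a := ⟨X.src a.1, hQ.src_mem _ a.2⟩
  tgt a := ⟨X.tgt a.1, hQ.tgt_mem _ a.2⟩
  ide a := ⟨X.ide a.1, hQ.ide_mem _ a.2⟩
  comp k a b := if h : X.Composable k a.1 b.1 then ⟨X.comp k a.1 b.1, hQ.comp_mem k _ _ h a.2 b.2⟩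
    else a

variable (hQ : X.IsSubcategory Q)

theorem srcAt_val (k : ℕ) (a : hQ.toOmegaCat.cell) :
    (hQ.toOmegaCat.srcAt k a).1 = X.srcAt k a.1 :=
  (Function.Semiconj.iterate_right (f := Subtype.val) (fun _ => rfl) _) a

theorem tgtAt_val (k : ℕ) (a : hQ.toOmegaCat.cell) :
    (hQ.toOmegaCat.tgtAt k a).1 = X.tgtAt k a.1 :=
  (Function.Semiconj.iterate_right (f := Subtype.val) (fun _ => rfl) _) a

theorem idePad_val (m : ℕ) (a : hQ.toOmegaCat.cell) :
    (hQ.toOmegaCat.idePad m a).1 = X.idePad m a.1 :=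
  (Function.Semiconj.iterate_right (f := Subtype.val) (fun _ => rfl) _) a

theorem composable_iff {k : ℕ} {a b : hQ.toOmegaCat.cell} :
    hQ.toOmegaCat.Composable k a b ↔ X.Composable k a.1 b.1 := by
  rw [Composable, Composable, ← Subtype.val_inj, srcAt_val, tgtAt_val]

theorem comp_val {k : ℕ} {a b : hQ.toOmegaCat.cell} (h : X.Composable k a.1 b.1) :
    (hQ.toOmegaCat.comp k a b).1 = X.comp k a.1 b.1 := by
  exact congrArg Subtype.val (dif_pos h)

variable {hQ}

theorem comp_assoc (hX : X.Laws) {k : ℕ} {a b c : hQ.toOmegaCat.cell}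
    (hab : hQ.toOmegaCat.Composable k a b) (hbc : hQ.toOmegaCat.Composable k b c) :
    hQ.toOmegaCat.comp k (hQ.toOmegaCat.comp k a b) c =
      hQ.toOmegaCat.comp k a (hQ.toOmegaCat.comp k b c) := by
  rw [composable_iff] at hab hbc
  have hab_c : X.Composable k (hQ.toOmegaCat.comp k a b).1 c.1 := by
    rw [comp_val _ hab]; exact hX.composable_comp_left hab hbc
  have ha_bc : X.Composable k a.1 (hQ.toOmegaCat.comp k b c).1 := by
    rw [comp_val _ hbc]; exact hX.composable_comp_right hab hbc
  apply Subtype.ext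
  rw [comp_val _ hab_c, comp_val _ ha_bc, comp_val _ hab, comp_val _ hbc,
    hX.comp_assoc k _ _ _ hab hbc]

theorem exch (hX : X.Laws) {l k : ℕ} {t t₁ s s₁ : hQ.toOmegaCat.cell} (hlk : l < k)
    (ht : hQ.toOmegaCat.Composable k t t₁) (hs : hQ.toOmegaCat.Composable k s s₁)
    (h : hQ.toOmegaCat.Composable l (hQ.toOmegaCat.comp k t t₁) (hQ.toOmegaCat.comp k s s₁)) :
    hQ.toOmegaCat.comp l (hQ.toOmegaCat.comp k t t₁) (hQ.toOmegaCat.comp k s s₁) =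
      hQ.toOmegaCat.comp k (hQ.toOmegaCat.comp l t s) (hQ.toOmegaCat.comp l t₁ s₁) := by
  rw [composable_iff] at ht hs h
  rw [comp_val _ ht, comp_val _ hs] at h
  obtain ⟨hts, ht₁s₁, hout⟩ := hX.composable_of_exch hlk ht hs h
  have h' : X.Composable l (hQ.toOmegaCat.comp k t t₁).1 (hQ.toOmegaCat.comp k s s₁).1 := by
    rwa [comp_val _ ht, comp_val _ hs]
  have hout' : X.Composable k (hQ.toOmegaCat.comp l t s).1 (hQ.toOmegaCat.comp l t₁ s₁).1 := by
    rwa [comp_val _ hts, comp_val _ ht₁s₁]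
  apply Subtype.ext
  rw [comp_val _ h', comp_val _ ht, comp_val _ hs, comp_val _ hout', comp_val _ hts,
    comp_val _ ht₁s₁, hX.exch l k _ _ _ _ hlk ht hs h]

theorem comp_id_left (hX : X.Laws) {k : ℕ} {a : hQ.toOmegaCat.cell} (h : k < X.dim a.1) :
    hQ.toOmegaCat.comp k (hQ.toOmegaCat.idePad (X.dim a.1) (hQ.toOmegaCat.tgtAt k a)) a = a := by
  have hid : (hQ.toOmegaCat.idePad (X.dim a.1) (hQ.toOmegaCat.tgtAt k a)).1 =
      X.idePad (X.dim a.1) (X.tgtAt k a.1) := by rw [idePad_val, tgtAt_val]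
  apply Subtype.ext
  rw [comp_val _ (by rw [hid]; exact hX.composable_idePad_tgtAt h), hid, hX.comp_id_left k _ h]

theorem comp_id_right (hX : X.Laws) {k : ℕ} {a : hQ.toOmegaCat.cell} (h : k < X.dim a.1) :
    hQ.toOmegaCat.comp k a (hQ.toOmegaCat.idePad (X.dim a.1) (hQ.toOmegaCat.srcAt k a)) = a := by
  have hid : (hQ.toOmegaCat.idePad (X.dim a.1) (hQ.toOmegaCat.srcAt k a)).1 =
      X.idePad (X.dim a.1) (X.srcAt k a.1) := by rw [idePad_val, srcAt_val]
  apply Subtype.ext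
  rw [comp_val _ (by rw [hid]; exact hX.composable_idePad_srcAt h), hid, hX.comp_id_right k _ h]

theorem laws (hX : X.Laws) : hQ.toOmegaCat.Laws where
  src_dim0 a h := ⟨Subtype.ext (hX.src_dim0 a.1 h).1, Subtype.ext (hX.src_dim0 a.1 h).2⟩
  dim_src a := hX.dim_src a.1
  dim_tgt a := hX.dim_tgt a.1
  src_src a h := Subtype.ext (hX.src_src a.1 h)
  tgt_src a h := Subtype.ext (hX.tgt_src a.1 h)
  dim_ide a := hX.dim_ide a.1
  src_ide a := Subtype.ext (hX.src_ide a.1)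
  tgt_ide a := Subtype.ext (hX.tgt_ide a.1)
  dim_comp k a b h := by
    rw [composable_iff] at h
    exact (congrArg X.dim (comp_val hQ h)).trans (hX.dim_comp k _ _ h)
  bd_comp_top k a b h htop := by
    rw [composable_iff] at h
    exact ⟨Subtype.ext ((congrArg X.src (comp_val hQ h)).trans (hX.bd_comp_top k _ _ h htop).1),
      Subtype.ext ((congrArg X.tgt (comp_val hQ h)).trans (hX.bd_comp_top k _ _ h htop).2)⟩
  bd_comp k a b h hlt := by
    rw [composable_iff] at h
    refine ⟨Subtype.ext ?_, Subtype.ext ?_⟩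
    · exact (congrArg X.src (comp_val hQ h)).trans <| (hX.bd_comp k _ _ h hlt).1.trans
        (comp_val hQ (a := hQ.toOmegaCat.src a) (b := hQ.toOmegaCat.src b)
          (hX.composable_src h hlt)).symm
    · exact (congrArg X.tgt (comp_val hQ h)).trans <| (hX.bd_comp k _ _ h hlt).2.trans
        (comp_val hQ (a := hQ.toOmegaCat.tgt a) (b := hQ.toOmegaCat.tgt b)
          (hX.composable_tgt h hlt)).symm
  comp_assoc _ _ _ _ := comp_assoc hX
  exch _ _ _ _ _ _ := exch hX
  comp_id_left _ _ := comp_id_left hX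
  comp_id_right _ _ := comp_id_right hX
  ide_comp k a b h := by
    rw [composable_iff] at h
    exact Subtype.ext ((congrArg X.ide (comp_val hQ h)).trans <| (hX.ide_comp k _ _ h).trans
      (comp_val hQ (a := hQ.toOmegaCat.ide a) (b := hQ.toOmegaCat.ide b)
        (hX.composable_ide h)).symm)

end IsSubcategory

end OmegaCat

namespace OmegaCat

variable {X : OmegaCat}

def HoldsOnFaces (X : OmegaCat) (n : ℕ) (P : X.cell → Prop) (u : X.cell) : Prop :=
  (X.dim u = n → P u) ∧ (n < X.dim u → P (X.srcAt n u) ∧ P (X.tgtAt n u))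

variable {n : ℕ} {P : X.cell → Prop}

theorem holdsOnFaces_of_dim_lt {u : X.cell} (h : X.dim u < n) : X.HoldsOnFaces n P u :=
  ⟨fun h' => absurd h' (by omega), fun h' => absurd h' (by omega)⟩

theorem HoldsOnFaces.src (hX : X.Laws) {u : X.cell} (hu : X.HoldsOnFaces n P u) :
    X.HoldsOnFaces n P (X.src u) := by
  rcases Nat.eq_zero_or_pos (X.dim u) with h0 | h0
  · rwa [(hX.src_dim0 u h0).1]
  have hd := hX.dim_src u h0
  refine ⟨fun h => ?_, fun h => ?_⟩
  · rw [← srcAt_of_dim_eq_succ (k := n) (by omega)]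
    exact (hu.2 (by omega)).1
  · rw [hX.srcAt_src (by omega), hX.tgtAt_src (by omega)]
    exact hu.2 (by omega)

theorem HoldsOnFaces.tgt (hX : X.Laws) {u : X.cell} (hu : X.HoldsOnFaces n P u) :
    X.HoldsOnFaces n P (X.tgt u) := by
  rcases Nat.eq_zero_or_pos (X.dim u) with h0 | h0
  · rwa [(hX.src_dim0 u h0).2]
  have hd := hX.dim_tgt u h0
  refine ⟨fun h => ?_, fun h => ?_⟩
  · rw [← tgtAt_of_dim_eq_succ (k := n) (by omega)]
    exact (hu.2 (by omega)).2
  · rw [hX.srcAt_tgt (by omega), hX.tgtAt_tgt (by omega)]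
    exact hu.2 (by omega)

theorem HoldsOnFaces.ide (hX : X.Laws) (hide : ∀ u, X.dim u = n - 1 → P (X.ide u))
    {u : X.cell} (hu : X.HoldsOnFaces n P u) : X.HoldsOnFaces n P (X.ide u) := by
  have hd := hX.dim_ide u
  refine ⟨fun h => hide u (by omega), fun h => ?_⟩
  rw [hX.srcAt_ide (by omega), hX.tgtAt_ide (by omega)]
  rcases Nat.eq_or_lt_of_le (show n ≤ X.dim u by omega) with heq | hlt
  · rw [srcAt_of_dim_eq heq.symm, tgtAt_of_dim_eq heq.symm]
    exact ⟨hu.1 heq.symm, hu.1 heq.symm⟩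
  · exact hu.2 hlt

theorem HoldsOnFaces.comp (hX : X.Laws)
    (hcomp : ∀ k u v, X.Composable k u v → X.dim u = n → P u → P v → P (X.comp k u v))
    {k : ℕ} {u v : X.cell} (h : X.Composable k u v)
    (hu : X.HoldsOnFaces n P u) (hv : X.HoldsOnFaces n P v) :
    X.HoldsOnFaces n P (X.comp k u v) := by
  have hdc := hX.dim_comp k u v h
  have hdv : X.dim v = X.dim u := h.1.symm
  refine ⟨fun h' => hcomp k u v h (by omega) (hu.1 (by omega)) (hv.1 (by omega)), fun h' => ?_⟩
  rcases lt_or_ge k n with hk | hk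
  · rw [hX.srcAt_comp_of_lt h hk (by omega), hX.tgtAt_comp_of_lt h hk (by omega)]
    exact ⟨hcomp k _ _ (hX.composable_srcAt h hk (by omega)) (hX.dim_srcAt (by omega))
        (hu.2 (by omega)).1 (hv.2 (by omega)).1,
      hcomp k _ _ (hX.composable_tgtAt h hk (by omega)) (hX.dim_tgtAt (by omega))
        (hu.2 (by omega)).2 (hv.2 (by omega)).2⟩
  · rw [hX.srcAt_comp_of_le h hk, hX.tgtAt_comp_of_le h hk]
    exact ⟨(hv.2 (by omega)).1, (hu.2 (by omega)).2⟩

theorem isSubcategory_holdsOnFaces (hX : X.Laws) (hide : ∀ u, X.dim u = n - 1 → P (X.ide u))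
    (hcomp : ∀ k u v, X.Composable k u v → X.dim u = n → P u → P v → P (X.comp k u v)) :
    X.IsSubcategory (X.HoldsOnFaces n P) :=
  ⟨fun _ => HoldsOnFaces.src hX, fun _ => HoldsOnFaces.tgt hX,
    fun _ => HoldsOnFaces.ide hX hide, fun _ _ _ h => HoldsOnFaces.comp hX hcomp h⟩

end OmegaCat

/-- The conditions that `FreeAtLevel` imposes on the extension `G` of `e` and `φ`. -/
def IsFreeLift (X : OmegaCat) (n : ℕ) (I : Set X.cell) {Z : OmegaCat}
    (e φ G : X.cell → Z.cell) : Prop :=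
  (∀ u, X.dim u ≤ n - 1 → G u = e u) ∧ (∀ x ∈ I, G x = φ x) ∧
  (∀ u, X.dim u ≤ n → Z.dim (G u) = X.dim u) ∧
  (∀ u, 0 < X.dim u → X.dim u ≤ n → Z.src (G u) = G (X.src u) ∧ Z.tgt (G u) = G (X.tgt u)) ∧
  (∀ k u v, X.Composable k u v → X.dim u ≤ n → G (X.comp k u v) = Z.comp k (G u) (G v)) ∧
  (∀ u, X.dim u < n → G (X.ide u) = Z.ide (G u))

namespace IsFreeLift

variable {X Z : OmegaCat} {n : ℕ} {I : Set X.cell} {e φ G : X.cell → Z.cell}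

theorem iterate_src (hX : X.Laws) (hG : IsFreeLift X n I e φ G) {j : ℕ} {u : X.cell}
    (hj : j ≤ X.dim u) (hu : X.dim u ≤ n) : Z.src^[j] (G u) = G (X.src^[j] u) := by
  induction j generalizing u with
  | zero => rfl
  | succ j ih =>
    rw [Function.iterate_succ_apply, Function.iterate_succ_apply,
      (hG.2.2.2.1 u (by omega) hu).1, ih (by rw [hX.dim_src u (by omega)]; omega)
        (by rw [hX.dim_src u (by omega)]; omega)]

theorem iterate_tgt (hX : X.Laws) (hG : IsFreeLift X n I e φ G) {j : ℕ} {u : X.cell}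
    (hj : j ≤ X.dim u) (hu : X.dim u ≤ n) : Z.tgt^[j] (G u) = G (X.tgt^[j] u) := by
  induction j generalizing u with
  | zero => rfl
  | succ j ih =>
    rw [Function.iterate_succ_apply, Function.iterate_succ_apply,
      (hG.2.2.2.1 u (by omega) hu).2, ih (by rw [hX.dim_tgt u (by omega)]; omega)
        (by rw [hX.dim_tgt u (by omega)]; omega)]

theorem composable (hX : X.Laws) (hG : IsFreeLift X n I e φ G) {k : ℕ} {u v : X.cell}
    (h : X.Composable k u v) (hu : X.dim u ≤ n) : Z.Composable k (G u) (G v) := by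
  obtain ⟨hdim, hk, hmid⟩ := h
  have hGu := hG.2.2.1 u hu
  have hGv := hG.2.2.1 v (by omega)
  refine ⟨by rw [hGu, hGv, hdim], by rwa [hGu], ?_⟩
  rw [OmegaCat.srcAt, OmegaCat.tgtAt, hGu, hGv, hG.iterate_src hX (Nat.sub_le _ _) hu,
    hG.iterate_tgt hX (Nat.sub_le _ _) (by omega)]
  exact congrArg G hmid

end IsFreeLift

theorem OmegaCat.extendsAt_id (X : OmegaCat) (m : ℕ) : ExtendsAt X X m id :=
  ⟨fun _ _ _ _ h => h, fun u hu => ⟨u, hu, rfl⟩, fun _ _ => rfl, fun _ _ _ => ⟨rfl, rfl⟩,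
    fun _ _ => rfl, fun _ _ _ _ _ => rfl⟩

namespace FreeAtLevel

variable {X : OmegaCat} {n : ℕ} {I : Set X.cell}

theorem exists_isFreeLift (hfree : FreeAtLevel X n I) {Z : OmegaCat} (hZ : Z.Laws)
    {e : X.cell → Z.cell} (he : ExtendsAt Z X (n - 1) e) {φ : X.cell → Z.cell}
    (hφ : ∀ x ∈ I, Z.dim (φ x) = n ∧ Z.src (φ x) = e (X.src x) ∧ Z.tgt (φ x) = e (X.tgt x)) :
    ∃ G, IsFreeLift X n I e φ G ∧
      ∀ G', IsFreeLift X n I e φ G' → ∀ u, X.dim u ≤ n → G' u = G u :=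
  hfree.2 Z hZ e he φ hφ

theorem eq_self_of_isFreeLift (hfree : FreeAtLevel X n I) (hX : X.Laws)
    {G : X.cell → X.cell} (hG : IsFreeLift X n I id id G) {u : X.cell} (hu : X.dim u ≤ n) :
    G u = u := by
  obtain ⟨G₀, -, huniq⟩ := hfree.exists_isFreeLift hX (X.extendsAt_id (n - 1))
    (fun x hx => ⟨hfree.1 x hx, rfl, rfl⟩)
  have hid : IsFreeLift X n I id id id :=
    ⟨fun _ _ => rfl, fun _ _ => rfl, fun _ _ => rfl, fun _ _ _ => ⟨rfl, rfl⟩,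
      fun _ _ _ _ _ => rfl, fun _ _ => rfl⟩
  rw [huniq G hG u hu, ← huniq id hid u hu, id]

end FreeAtLevel

namespace OmegaCat.IsSubcategory

variable {X : OmegaCat} {Q : X.cell → Prop} (hQ : X.IsSubcategory Q)

open Classical in
/-- The inclusion of `Q`-cells, extended to all cells by a fixed junk value `a₀`. -/
noncomputable def restrict (a₀ : hQ.toOmegaCat.cell) (u : X.cell) : hQ.toOmegaCat.cell :=
  if h : Q u then ⟨u, h⟩ else a₀

variable {hQ} {a₀ : hQ.toOmegaCat.cell}

theorem restrict_val {u : X.cell} (h : Q u) : (hQ.restrict a₀ u).1 = u :=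
  congrArg Subtype.val (dif_pos h)

theorem src_restrict {u : X.cell} (h : Q u) :
    hQ.toOmegaCat.src (hQ.restrict a₀ u) = hQ.restrict a₀ (X.src u) :=
  Subtype.ext ((congrArg X.src (restrict_val h)).trans (restrict_val (hQ.src_mem _ h)).symm)

theorem tgt_restrict {u : X.cell} (h : Q u) :
    hQ.toOmegaCat.tgt (hQ.restrict a₀ u) = hQ.restrict a₀ (X.tgt u) :=
  Subtype.ext ((congrArg X.tgt (restrict_val h)).trans (restrict_val (hQ.tgt_mem _ h)).symm)

theorem ide_restrict {u : X.cell} (h : Q u) :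
    hQ.toOmegaCat.ide (hQ.restrict a₀ u) = hQ.restrict a₀ (X.ide u) :=
  Subtype.ext ((congrArg X.ide (restrict_val h)).trans (restrict_val (hQ.ide_mem _ h)).symm)

theorem extendsAt_restrict {m : ℕ} (hlow : ∀ u, X.dim u ≤ m → Q u) :
    ExtendsAt hQ.toOmegaCat X m (hQ.restrict a₀) := by
  refine ⟨fun a b ha hb hab => ?_, fun u hu => ⟨u.1, hu, Subtype.ext (restrict_val u.2)⟩,
    fun a ha => congrArg X.dim (restrict_val (hlow a ha)),
    fun a _ ha => ⟨src_restrict (hlow a ha), tgt_restrict (hlow a ha)⟩,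
    fun a ha => ide_restrict (hlow a ha.le), fun k a b hab ha => ?_⟩
  · rw [← restrict_val (a₀ := a₀) (hlow a ha), hab, restrict_val (hlow b hb)]
  · have hb := hlow b (by rw [← hab.1]; exact ha)
    have hab' : X.Composable k (hQ.restrict a₀ a).1 (hQ.restrict a₀ b).1 := by
      rwa [restrict_val (hlow a ha), restrict_val hb]
    apply Subtype.ext
    rw [comp_val hQ hab', restrict_val (hlow a ha), restrict_val hb,
      restrict_val (hQ.comp_mem k a b hab (hlow a ha) hb)]

theorem isFreeLift_val (hX : X.Laws) {n : ℕ} {I : Set X.cell}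
    (hlow : ∀ u, X.dim u ≤ n - 1 → Q u) (hI : ∀ x ∈ I, Q x)
    {G : X.cell → hQ.toOmegaCat.cell}
    (hG : IsFreeLift X n I (hQ.restrict a₀) (hQ.restrict a₀) G) :
    IsFreeLift X n I id id (fun u => (G u).1) := by
  obtain ⟨hGe, hGφ, hGdim, hGbd, hGcomp, hGide⟩ := hG
  refine ⟨fun u hu => ?_, fun x hx => ?_, hGdim, fun u h0 hu => ?_, fun k u v h hu => ?_,
    fun u hu => congrArg Subtype.val (hGide u hu)⟩
  · exact (congrArg Subtype.val (hGe u hu)).trans (restrict_val (hlow u hu))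
  · exact (congrArg Subtype.val (hGφ x hx)).trans (restrict_val (hI x hx))
  · exact ⟨congrArg Subtype.val (hGbd u h0 hu).1, congrArg Subtype.val (hGbd u h0 hu).2⟩
  · have hGuv := (composable_iff hQ).1 (IsFreeLift.composable hX
      ⟨hGe, hGφ, hGdim, hGbd, hGcomp, hGide⟩ h hu)
    exact (congrArg Subtype.val (hGcomp k u v h hu)).trans (comp_val hQ hGuv)

end OmegaCat.IsSubcategory

namespace FreeAtLevel

open OmegaCat

variable {X : OmegaCat} {n : ℕ} {I : Set X.cell}

theorem induction_on (hfree : FreeAtLevel X n I) (hX : X.Laws) (hn : 1 ≤ n)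
    {P : X.cell → Prop} (gen : ∀ x ∈ I, P x) (ide : ∀ u, X.dim u = n - 1 → P (X.ide u))
    (comp : ∀ k u v, X.Composable k u v → X.dim u = n → P u → P v → P (X.comp k u v))
    {u : X.cell} (hu : X.dim u = n) : P u := by
  have hQ := isSubcategory_holdsOnFaces hX ide comp
  have hlow : ∀ a, X.dim a ≤ n - 1 → X.HoldsOnFaces n P a :=
    fun a ha => holdsOnFaces_of_dim_lt (by omega)
  have hI : ∀ x ∈ I, X.HoldsOnFaces n P x :=
    fun x hx => ⟨fun _ => gen x hx, fun h => absurd (hfree.1 x hx) (by omega)⟩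
  let a₀ : hQ.toOmegaCat.cell :=
    ⟨X.srcAt 0 u, hlow _ (by rw [hX.dim_srcAt (Nat.zero_le _)]; omega)⟩
  obtain ⟨G, hG, -⟩ := hfree.exists_isFreeLift (hQ.laws hX)
    (IsSubcategory.extendsAt_restrict (a₀ := a₀) hlow) (φ := hQ.restrict a₀) fun x hx =>
      ⟨(congrArg X.dim (IsSubcategory.restrict_val (hI x hx))).trans (hfree.1 x hx),
        IsSubcategory.src_restrict (hI x hx), IsSubcategory.tgt_restrict (hI x hx)⟩
  have hGu : (G u).1 = u :=
    hfree.eq_self_of_isFreeLift hX (IsSubcategory.isFreeLift_val hX hlow hI hG) hu.le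
  exact hGu ▸ (G u).2.1 (by rw [hGu, hu])

end FreeAtLevel

/-- The hypothesis `⟦u ▫_r v⟧ = (⟦u⟧ ∖ {r}) ⊔ ⟦v⟧` on the occurrences of a replacement. -/
def RepOccurrences (X : OmegaCat) (n : ℕ) {I : Set X.cell} (D : CellOcc X n I)
    (rep : X.cell → ℕ → X.cell → X.cell) : Prop :=
  ∀ u r v, WDef X n D u r v → X.dim v = n →
    Disjoint ((D.oI u).erase r) (D.oI v) ∧
    D.oI (rep u r v) = ((D.oI u).erase r) ∪ D.oI v ∧
    (∀ i ∈ (D.oI u).erase r, D.oF (rep u r v) i = D.oF u i) ∧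
    (∀ i ∈ D.oI v, D.oF (rep u r v) i = D.oF v i)

section Whiskering

open OmegaCat

variable {X : OmegaCat} {n : ℕ} {I : Set X.cell} {D : CellOcc X n I}
  {rep : X.cell → ℕ → X.cell → X.cell}

namespace WDef

theorem comp_left (hX : X.Laws) {k : ℕ} {u₁ u₂ v : X.cell} {r : ℕ} (h : X.Composable k u₁ u₂)
    (hw : WDef X n D u₁ r v) : WDef X n D (X.comp k u₁ u₂) r v := by
  obtain ⟨hd, hr, hv, hsrc, htgt⟩ := hw
  obtain ⟨-, hoI, hoF, -⟩ := D.occ_comp k u₁ u₂ (hd ▸ h.2.1) hd h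
  refine ⟨(hX.dim_comp k _ _ h).trans hd, hoI ▸ Finset.mem_union_left _ hr, hv, ?_, ?_⟩ <;>
    rwa [hoF r hr]

theorem comp_right (hX : X.Laws) {k : ℕ} {u₁ u₂ v : X.cell} {r : ℕ} (h : X.Composable k u₁ u₂)
    (hw : WDef X n D u₂ r v) : WDef X n D (X.comp k u₁ u₂) r v := by
  obtain ⟨hd, hr, hv, hsrc, htgt⟩ := hw
  have hd₁ : X.dim u₁ = n := h.1.trans hd
  obtain ⟨-, hoI, -, hoF⟩ := D.occ_comp k u₁ u₂ (hd₁ ▸ h.2.1) hd₁ h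
  refine ⟨(hX.dim_comp k _ _ h).trans hd₁, hoI ▸ Finset.mem_union_right _ hr, hv, ?_, ?_⟩ <;>
    rwa [hoF r hr]

theorem of_comp {k : ℕ} {u₁ u₂ v : X.cell} {r : ℕ} (h : X.Composable k u₁ u₂)
    (hd : X.dim u₁ = n) (hw : WDef X n D (X.comp k u₁ u₂) r v) :
    WDef X n D u₁ r v ∨ WDef X n D u₂ r v := by
  obtain ⟨-, hr, hv, hsrc, htgt⟩ := hw
  obtain ⟨-, hoI, hoF₁, hoF₂⟩ := D.occ_comp k u₁ u₂ (hd ▸ h.2.1) hd h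
  rcases Finset.mem_union.1 (hoI ▸ hr) with hr | hr
  · exact .inl ⟨hd, hr, hv, hoF₁ r hr ▸ hsrc, hoF₁ r hr ▸ htgt⟩
  · exact .inr ⟨h.1 ▸ hd, hr, hv, hoF₂ r hr ▸ hsrc, hoF₂ r hr ▸ htgt⟩

theorem of_mem (hn : 1 ≤ n) (hI : ∀ x ∈ I, X.dim x = n) {u : X.cell} {r : ℕ}
    (hd : X.dim u = n) (hr : r ∈ D.oI u) : WDef X n D u r (D.oF u r) := by
  have hx := hI _ (D.occ_mem u r hr)
  exact ⟨hd, hr, hx.ge, srcAt_of_dim_eq_succ (by omega), tgtAt_of_dim_eq_succ (by omega)⟩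

end WDef

namespace IsWhisk

theorem dim_rep (hrep : IsWhisk X n D rep) {u v : X.cell} {r : ℕ} (hw : WDef X n D u r v) :
    X.dim (rep u r v) = X.dim v :=
  (hrep.1 u r v hw).1

theorem composable_rep_left (hX : X.Laws) (hn : 1 ≤ n) (hrep : IsWhisk X n D rep) {k : ℕ}
    {u₁ u₂ v : X.cell} {r : ℕ} (h : X.Composable k u₁ u₂) (hw : WDef X n D u₁ r v)
    (hv : X.dim v = n) : X.Composable k (rep u₁ r v) u₂ := by
  have hd : X.dim (rep u₁ r v) = n := (hrep.dim_rep hw).trans hv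
  have hd₁ : X.dim u₁ = n := hw.1
  have hk : k ≤ n - 1 := by have := h.2.1; omega
  refine ⟨hd.trans (hw.1.symm.trans h.1), hd ▸ hw.1 ▸ h.2.1, ?_⟩
  rw [← hX.srcAt_srcAt hk (by omega), (hrep.1 u₁ r v hw).2.1,
    ← srcAt_of_dim_eq_succ (k := n - 1) (by omega), hX.srcAt_srcAt hk (by omega)]
  exact h.2.2

theorem composable_rep_right (hX : X.Laws) (hn : 1 ≤ n) (hrep : IsWhisk X n D rep) {k : ℕ}
    {u₁ u₂ v : X.cell} {r : ℕ} (h : X.Composable k u₁ u₂) (hw : WDef X n D u₂ r v)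
    (hv : X.dim v = n) : X.Composable k u₁ (rep u₂ r v) := by
  have hd : X.dim (rep u₂ r v) = n := (hrep.dim_rep hw).trans hv
  have hd₂ : X.dim u₂ = n := hw.1
  have hk : k ≤ n - 1 := by have := h.2.1; have := h.1; omega
  refine ⟨h.1.trans (hw.1.trans hd.symm), h.2.1, ?_⟩
  rw [← hX.tgtAt_tgtAt hk (by omega), (hrep.1 u₂ r v hw).2.2,
    ← tgtAt_of_dim_eq_succ (k := n - 1) (by omega), hX.tgtAt_tgtAt hk (by omega)]
  exact h.2.2

theorem rep_comp_left (hX : X.Laws) (hrep : IsWhisk X n D rep) {k : ℕ} {u₁ u₂ v : X.cell}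
    {r : ℕ} (h : X.Composable k u₁ u₂) (hw : WDef X n D u₁ r v) :
    rep (X.comp k u₁ u₂) r v = X.wcomp k (rep u₁ r v) u₂ :=
  (hrep.2.2 k u₁ u₂ r v (hw.1 ▸ h.2.1) hw.1 h (hw.comp_left hX h)).1 hw.2.1

theorem rep_comp_right (hX : X.Laws) (hrep : IsWhisk X n D rep) {k : ℕ} {u₁ u₂ v : X.cell}
    {r : ℕ} (h : X.Composable k u₁ u₂) (hw : WDef X n D u₂ r v) :
    rep (X.comp k u₁ u₂) r v = X.wcomp k u₁ (rep u₂ r v) :=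
  have hd₁ : X.dim u₁ = n := h.1.trans hw.1
  (hrep.2.2 k u₁ u₂ r v (hd₁ ▸ h.2.1) hd₁ h (hw.comp_right hX h)).2 hw.2.1

theorem rep_comp_left_of_dim_eq (hX : X.Laws) (hrep : IsWhisk X n D rep) {k : ℕ}
    {u₁ u₂ v : X.cell} {r : ℕ} (h : X.Composable k u₁ u₂) (hw : WDef X n D u₁ r v)
    (hv : X.dim v = n) : rep (X.comp k u₁ u₂) r v = X.comp k (rep u₁ r v) u₂ := by
  rw [hrep.rep_comp_left hX h hw, wcomp_of_dim_eq (by rw [hrep.dim_rep hw, hv, ← h.1, hw.1])]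

theorem rep_comp_right_of_dim_eq (hX : X.Laws) (hrep : IsWhisk X n D rep) {k : ℕ}
    {u₁ u₂ v : X.cell} {r : ℕ} (h : X.Composable k u₁ u₂) (hw : WDef X n D u₂ r v)
    (hv : X.dim v = n) : rep (X.comp k u₁ u₂) r v = X.comp k u₁ (rep u₂ r v) := by
  rw [hrep.rep_comp_right hX h hw, wcomp_of_dim_eq (by rw [hrep.dim_rep hw, hv, h.1, hw.1])]

theorem wDef_rep_of_ne (hrep : IsWhisk X n D rep) (hro : RepOccurrences X n D rep)
    {u v w : X.cell} {r q : ℕ} (hw : WDef X n D u r v) (hv : X.dim v = n)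
    (hwq : WDef X n D u q w) (hqr : q ≠ r) : WDef X n D (rep u r v) q w := by
  obtain ⟨-, hoI, hoF, -⟩ := hro u r v hw hv
  have hq : q ∈ (D.oI u).erase r := Finset.mem_erase.2 ⟨hqr, hwq.2.1⟩
  exact ⟨(hrep.dim_rep hw).trans hv, hoI ▸ Finset.mem_union_left _ hq, hwq.2.2.1,
    hoF q hq ▸ hwq.2.2.2.1, hoF q hq ▸ hwq.2.2.2.2⟩

theorem wDef_rep_of_wDef (hrep : IsWhisk X n D rep) (hro : RepOccurrences X n D rep)
    {u v w : X.cell} {r q : ℕ} (hw : WDef X n D u r v) (hv : X.dim v = n)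
    (hwq : WDef X n D v q w) : WDef X n D (rep u r v) q w := by
  obtain ⟨-, hoI, -, hoF⟩ := hro u r v hw hv
  exact ⟨(hrep.dim_rep hw).trans hv, hoI ▸ Finset.mem_union_right _ hwq.2.1, hwq.2.2.1,
    hoF q hwq.2.1 ▸ hwq.2.2.2.1, hoF q hwq.2.1 ▸ hwq.2.2.2.2⟩

theorem wDef_rep_right (hn : 1 ≤ n) (hrep : IsWhisk X n D rep) {u v w : X.cell} {r q : ℕ}
    (hw : WDef X n D u r v) (hv : X.dim v = n) (hwq : WDef X n D v q w) :
    WDef X n D u r (rep v q w) := by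
  obtain ⟨hdim, hsrc, htgt⟩ := hrep.1 v q w hwq
  refine ⟨hw.1, hw.2.1, hdim ▸ hwq.2.2.1, ?_, ?_⟩
  · rw [hsrc, ← srcAt_of_dim_eq_succ (k := n - 1) (by omega)]; exact hw.2.2.2.1
  · rw [htgt, ← tgtAt_of_dim_eq_succ (k := n - 1) (by omega)]; exact hw.2.2.2.2

end IsWhisk

namespace IsWhisk

theorem rep_oF_eq_self (hX : X.Laws) (hn : 1 ≤ n) (hfree : FreeAtLevel X n I)
    (hrep : IsWhisk X n D rep) {u : X.cell} (hd : X.dim u = n) {r : ℕ} (hr : r ∈ D.oI u) :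
    rep u r (D.oF u r) = u := by
  refine hfree.induction_on hX hn (P := fun u => ∀ r ∈ D.oI u, rep u r (D.oF u r) = u)
    (fun x hx r hr => ?_) (fun u hu r hr => ?_) (fun k u₁ u₂ h hd ih₁ ih₂ r hr => ?_) hd r hr
  · obtain ⟨r₀, hoI, hoF⟩ := D.occ_ind x hx
    have hw := WDef.of_mem hn hfree.1 (hfree.1 x hx) hr
    rw [hoI, Finset.mem_singleton] at hr
    subst hr
    rw [hoF] at hw ⊢
    exact hrep.2.1 x r x hx hoI hw
  · exact absurd (D.occ_ide u hu ▸ hr) (Finset.notMem_empty r)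
  · have hx := hfree.1 _ (D.occ_mem _ r hr)
    obtain ⟨-, -, hoF₁, hoF₂⟩ := D.occ_comp k u₁ u₂ (hd ▸ h.2.1) hd h
    rcases (WDef.of_mem hn hfree.1 ((hX.dim_comp k _ _ h).trans hd) hr).of_comp h hd with hw | hw
    · rw [hrep.rep_comp_left_of_dim_eq hX h hw hx, hoF₁ r hw.2.1, ih₁ r hw.2.1]
    · rw [hrep.rep_comp_right_of_dim_eq hX h hw hx, hoF₂ r hw.2.1, ih₂ r hw.2.1]

theorem rep_rep_comp_comm (hX : X.Laws) (hn : 1 ≤ n) (hrep : IsWhisk X n D rep) {k : ℕ}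
    {u₁ u₂ v w : X.cell} {r q : ℕ} (h : X.Composable k u₁ u₂) (hwr : WDef X n D u₁ r v)
    (hwq : WDef X n D u₂ q w) (hv : X.dim v = n) (hw : X.dim w = n) :
    rep (rep (X.comp k u₁ u₂) r v) q w = rep (rep (X.comp k u₁ u₂) q w) r v := by
  rw [hrep.rep_comp_left_of_dim_eq hX h hwr hv, hrep.rep_comp_right_of_dim_eq hX h hwq hw,
    hrep.rep_comp_right_of_dim_eq hX (hrep.composable_rep_left hX hn h hwr hv) hwq hw,
    hrep.rep_comp_left_of_dim_eq hX (hrep.composable_rep_right hX hn h hwq hw) hwr hv]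

theorem rep_rep_comm (hX : X.Laws) (hn : 1 ≤ n) (hfree : FreeAtLevel X n I)
    (hrep : IsWhisk X n D rep) (hro : RepOccurrences X n D rep) {u v w : X.cell} {r q : ℕ}
    (hrq : r ≠ q) (hwr : WDef X n D u r v) (hwq : WDef X n D u q w) (hv : X.dim v = n)
    (hw : X.dim w = n) : rep (rep u r v) q w = rep (rep u q w) r v := by
  refine hfree.induction_on hX hn (P := fun u => ∀ r q, r ≠ q → WDef X n D u r v →
      WDef X n D u q w → rep (rep u r v) q w = rep (rep u q w) r v)
    (fun x hx r q hrq hwr hwq => ?_) (fun u hu r q _ hwr _ => ?_)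
    (fun k u₁ u₂ h hd ih₁ ih₂ r q hrq hwr hwq => ?_) hwr.1 r q hrq hwr hwq
  · obtain ⟨r₀, hoI, -⟩ := D.occ_ind x hx
    have hr := hwr.2.1
    have hq := hwq.2.1
    rw [hoI, Finset.mem_singleton] at hr hq
    exact absurd (hr.trans hq.symm) hrq
  · exact absurd (D.occ_ide u hu ▸ hwr.2.1) (Finset.notMem_empty r)
  rcases hwr.of_comp h hd with hwr | hwr <;> rcases hwq.of_comp h hd with hwq | hwq
  · have hcr := hrep.composable_rep_left hX hn h hwr hv
    have hcq := hrep.composable_rep_left hX hn h hwq hw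
    rw [hrep.rep_comp_left_of_dim_eq hX h hwr hv, hrep.rep_comp_left_of_dim_eq hX h hwq hw,
      hrep.rep_comp_left_of_dim_eq hX hcr (hrep.wDef_rep_of_ne hro hwr hv hwq hrq.symm) hw,
      hrep.rep_comp_left_of_dim_eq hX hcq (hrep.wDef_rep_of_ne hro hwq hw hwr hrq) hv,
      ih₁ r q hrq hwr hwq]
  · exact hrep.rep_rep_comp_comm hX hn h hwr hwq hv hw
  · exact (hrep.rep_rep_comp_comm hX hn h hwq hwr hw hv).symm
  · have hcr := hrep.composable_rep_right hX hn h hwr hv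
    have hcq := hrep.composable_rep_right hX hn h hwq hw
    rw [hrep.rep_comp_right_of_dim_eq hX h hwr hv, hrep.rep_comp_right_of_dim_eq hX h hwq hw,
      hrep.rep_comp_right_of_dim_eq hX hcr (hrep.wDef_rep_of_ne hro hwr hv hwq hrq.symm) hw,
      hrep.rep_comp_right_of_dim_eq hX hcq (hrep.wDef_rep_of_ne hro hwq hw hwr hrq) hv,
      ih₂ r q hrq hwr hwq]

theorem rep_rep_assoc (hX : X.Laws) (hn : 1 ≤ n) (hfree : FreeAtLevel X n I)
    (hrep : IsWhisk X n D rep) (hro : RepOccurrences X n D rep) {u v w : X.cell} {r q : ℕ}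
    (hwr : WDef X n D u r v) (hv : X.dim v = n) (hwq : WDef X n D v q w) :
    rep (rep u r v) q w = rep u r (rep v q w) := by
  refine hfree.induction_on hX hn
    (P := fun u => ∀ r, WDef X n D u r v → rep (rep u r v) q w = rep u r (rep v q w))
    (fun x hx r hwr => ?_) (fun u hu r hwr => ?_) (fun k u₁ u₂ h hd ih₁ ih₂ r hwr => ?_)
    hwr.1 r hwr
  · obtain ⟨r₀, hoI, -⟩ := D.occ_ind x hx
    have hr := hwr.2.1
    rw [hoI, Finset.mem_singleton] at hr
    subst hr
    rw [hrep.2.1 x r v hx hoI hwr,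
      hrep.2.1 x r _ hx hoI (hrep.wDef_rep_right hn hwr hv hwq)]
  · exact absurd (D.occ_ide u hu ▸ hwr.2.1) (Finset.notMem_empty r)
  rcases hwr.of_comp h hd with hwr | hwr
  · rw [hrep.rep_comp_left_of_dim_eq hX h hwr hv,
      hrep.rep_comp_left hX (hrep.composable_rep_left hX hn h hwr hv)
        (hrep.wDef_rep_of_wDef hro hwr hv hwq),
      hrep.rep_comp_left hX h (hrep.wDef_rep_right hn hwr hv hwq), ih₁ r hwr]
  · rw [hrep.rep_comp_right_of_dim_eq hX h hwr hv,
      hrep.rep_comp_right hX (hrep.composable_rep_right hX hn h hwr hv)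
        (hrep.wDef_rep_of_wDef hro hwr hv hwq),
      hrep.rep_comp_right hX h (hrep.wDef_rep_right hn hwr hv hwq), ih₂ r hwr]

end IsWhisk

end Whiskering

/-- Commutativity, associativity and identity laws for the generalized
whiskering (replacement) operations on the `n`-cells of an ω-category whose
`n`-truncation is a free extension `A[I]`. -/
theorem stmt14 (X : OmegaCat) (hX : X.Laws) (n : ℕ) (hn : 1 ≤ n)
    (I : Set X.cell) (hfree : FreeAtLevel X n I) (D : CellOcc X n I)
    (rep : X.cell → ℕ → X.cell → X.cell) (hrep : IsWhisk X n D rep)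
    -- occurrence index sets of replacements: ⟦u ▫_r v⟧ = (⟦u⟧ \ {r}) ⊔ ⟦v⟧
    (hro : ∀ u r v, WDef X n D u r v → X.dim v = n →
      Disjoint ((D.oI u).erase r) (D.oI v) ∧
      D.oI (rep u r v) = ((D.oI u).erase r) ∪ D.oI v ∧
      (∀ i ∈ (D.oI u).erase r, D.oF (rep u r v) i = D.oF u i) ∧
      (∀ i ∈ D.oI v, D.oF (rep u r v) i = D.oF v i)) :
    -- commutativity
    (∀ u r q v w, r ≠ q → WDef X n D u r v → WDef X n D u q w →
      X.dim v = n → X.dim w = n →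
      rep (rep u r v) q w = rep (rep u q w) r v) ∧
    -- associativity (w of dimension ≥ n allowed)
    (∀ u r v q w, WDef X n D u r v → X.dim v = n → q ∈ D.oI v →
      WDef X n D v q w →
      rep (rep u r v) q w = rep u r (rep v q w)) ∧
    -- identity
    (∀ u r, X.dim u = n → r ∈ D.oI u → rep u r (D.oF u r) = u) :=
  ⟨fun _ _ _ _ _ hrq hwr hwq hv hw => hrep.rep_rep_comm hX hn hfree hro hrq hwr hwq hv hw,
    fun _ _ _ _ _ hwr hv _ hwq => hrep.rep_rep_assoc hX hn hfree hro hwr hv hwq,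
    fun _ _ hd hr => hrep.rep_oF_eq_self hX hn hfree hd hr⟩
end
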